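/- arXiv:2508.11725 — 11 statements merged into one kernel-verified Lean document; each statement's English description precedes it below -/
import Mathlib

section
/- The partition Q_1, ..., Q_m of the cube C_{m+2} = {0,...,m+1}³ given by the function f is internally adjacent: for every 1 ≤ i < j ≤ m, the sets Q_i and Q_j are adjacent. -/
abbrev P3 := ℤ × ℤ × ℤ

def unitVecs : Set P3 :=
  {(1,0,0), (-1,0,0), (0,1,0), (0,-1,0), (0,0,1), (0,0,-1)}

/-- Two disjoint sets are adjacent if some points differ by a coordinate unit vector. -/
def Adjacent (A B : Set P3) : Prop :=
  ∃ p ∈ A, ∃ q ∈ B, ∃ v ∈ unitVecs, p + v = q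

def cube (m : ℤ) : Set P3 :=
  {p | 0 ≤ p.1 ∧ p.1 ≤ m + 1 ∧ 0 ≤ p.2.1 ∧ p.2.1 ≤ m + 1 ∧ 0 ≤ p.2.2 ∧ p.2.2 ≤ m + 1}

/-- The partition function of the (m+2)×(m+2)×(m+2) cube. -/
def f (m : ℤ) (p : P3) : ℤ :=
  if 0 ≤ p.1 ∧ p.1 ≤ m ∧ 1 ≤ p.2.1 ∧ p.2.1 ≤ m ∧ p.2.2 = 0 then p.2.1
  else if 1 ≤ p.1 ∧ p.1 ≤ m ∧ 0 ≤ p.2.1 ∧ p.2.1 ≤ m ∧ p.2.2 = m + 1 then p.1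
  else if p.1 = 0 ∧ 1 ≤ p.2.1 ∧ p.2.1 ≤ m ∧ 1 ≤ p.2.2 ∧ p.2.2 ≤ m then p.2.1
  else if 1 ≤ p.1 ∧ p.1 ≤ m ∧ p.2.1 = 0 ∧ 1 ≤ p.2.2 ∧ p.2.2 ≤ m then p.1
  else if 1 ≤ p.1 ∧ p.1 ≤ m + 1 ∧ 1 ≤ p.2.1 ∧ p.2.1 ≤ m + 1 ∧ 1 ≤ p.2.2 ∧ p.2.2 ≤ m
    then p.2.2
  else 1

def Q (m i : ℤ) : Set P3 := {p ∈ cube m | f m p = i}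


/-- The partition Q_1, ..., Q_m is internally adjacent. -/
theorem stmt1 (m : ℤ) (hm : 1 ≤ m) (i j : ℤ) (hi : 1 ≤ i) (hij : i < j) (hj : j ≤ m) :
    Adjacent (Q m i) (Q m j) := by
  refine ⟨(i, 0, j), ⟨by simp only [cube, Set.mem_setOf_eq]; omega, ?_⟩,
    (i, 1, j), ⟨by simp only [cube, Set.mem_setOf_eq]; omega, ?_⟩,
    (0, 1, 0), by simp [unitVecs], by simp⟩
  · simp only [f]
    split_ifs <;> simp_all <;> omega
  · simp only [f]
    split_ifs <;> simp_all <;> omega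
end

section
/- The partition Q_1, ..., Q_m of C_{m+2} = {0,...,m+1}³ given by f is externally adjacent: for every 1 ≤ i < j ≤ m and every unit vector v parallel to a coordinate axis (positive or negative), the sets Q_i + (m+2)v and Q_j are adjacent. Equivalently, there exist a ∈ Q_i and b ∈ Q_j with a + (m+1)v = b. -/
def translateSet (A : Set P3) (v : P3) : Set P3 := (· + v) '' A

lemma adj_of (m i j : ℤ) (v : P3) (hv : -v ∈ unitVecs) (a b : P3)
    (ha : a ∈ Q m i) (hb : b ∈ Q m j) (hab : a + (m + 1) • v = b) :
    Adjacent (translateSet (Q m i) ((m + 2) • v)) (Q m j) :=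
  ⟨a + (m + 2) • v, ⟨a, ha, rfl⟩, b, hb, -v, hv, by rw [← hab]; module⟩

lemma both_of (m i j : ℤ) (v : P3) (hv : -v ∈ unitVecs) (a b : P3)
    (ha : a ∈ Q m i) (hb : b ∈ Q m j) (hab : a + (m + 1) • v = b) :
    Adjacent (translateSet (Q m i) ((m + 2) • v)) (Q m j) ∧
      ∃ a ∈ Q m i, ∃ b ∈ Q m j, a + (m + 1) • v = b :=
  ⟨adj_of m i j v hv a b ha hb hab, a, ha, b, hb, hab⟩

/-- The partition Q_1, ..., Q_m is externally adjacent: for every i < j and every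
coordinate unit vector v, Q_i + (m+2)v and Q_j are adjacent; equivalently there are
a ∈ Q_i and b ∈ Q_j with a + (m+1)v = b. -/
theorem stmt2 (m : ℤ) (hm : 1 ≤ m) (i j : ℤ) (hi : 1 ≤ i) (hij : i < j) (hj : j ≤ m) :
    ∀ v ∈ unitVecs,
      Adjacent (translateSet (Q m i) ((m + 2) • v)) (Q m j) ∧
      ∃ a ∈ Q m i, ∃ b ∈ Q m j, a + (m + 1) • v = b := by
  intro v hv
  simp only [unitVecs, Set.mem_insert_iff, Set.mem_singleton_iff] at hv
  rcases hv with rfl | rfl | rfl | rfl | rfl | rfl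
  · exact both_of m i j _ (by simp [unitVecs]) (0, i, j) (m + 1, i, j)
      ⟨by simp only [cube, Set.mem_setOf_eq]; omega, by simp only [f]; norm_num; omega⟩
      ⟨by simp only [cube, Set.mem_setOf_eq]; omega, by simp only [f]; norm_num; omega⟩
      (by simp [Prod.ext_iff]; try ring)
  · exact both_of m i j _ (by simp [unitVecs]) (m + 1, j, i) (0, j, i)
      ⟨by simp only [cube, Set.mem_setOf_eq]; omega, by simp only [f]; norm_num; omega⟩
      ⟨by simp only [cube, Set.mem_setOf_eq]; omega, by simp only [f]; norm_num; omega⟩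
      (by simp [Prod.ext_iff]; try ring)
  · exact both_of m i j _ (by simp [unitVecs]) (i, 0, j) (i, m + 1, j)
      ⟨by simp only [cube, Set.mem_setOf_eq]; omega, by simp only [f]; norm_num; omega⟩
      ⟨by simp only [cube, Set.mem_setOf_eq]; omega, by simp only [f]; norm_num; omega⟩
      (by simp [Prod.ext_iff]; try ring)
  · exact both_of m i j _ (by simp [unitVecs]) (j, m + 1, i) (j, 0, i)
      ⟨by simp only [cube, Set.mem_setOf_eq]; omega, by simp only [f]; norm_num; omega⟩
      ⟨by simp only [cube, Set.mem_setOf_eq]; omega, by simp only [f]; norm_num; omega⟩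
      (by simp [Prod.ext_iff]; try ring)
  · exact both_of m i j _ (by simp [unitVecs]) (j, i, 0) (j, i, m + 1)
      ⟨by simp only [cube, Set.mem_setOf_eq]; omega, by simp only [f]; norm_num; omega⟩
      ⟨by simp only [cube, Set.mem_setOf_eq]; omega, by simp only [f]; norm_num; omega⟩
      (by simp [Prod.ext_iff]; try ring)
  · exact both_of m i j _ (by simp [unitVecs]) (i, j, m + 1) (i, j, 0)
      ⟨by simp only [cube, Set.mem_setOf_eq]; omega, by simp only [f]; norm_num; omega⟩
      ⟨by simp only [cube, Set.mem_setOf_eq]; omega, by simp only [f]; norm_num; omega⟩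
      (by simp [Prod.ext_iff]; try ring)
end

section
/- For every m ≥ 1 and every 1 ≤ i ≤ m, the set Q_i = f⁻¹(i) ⊆ {0,...,m+1}³ is a connected polycube, i.e., nonempty and connected under the adjacency relation where two points are adjacent iff they differ by a coordinate unit vector. -/
/-- One step between lattice points: they differ by a coordinate unit vector. -/
def Step (p q : P3) : Prop := ∃ v ∈ unitVecs, p + v = q

/-- A nonempty set that is connected under unit-vector adjacency. -/
def IsConnectedPolycube (S : Set P3) : Prop :=
  S.Nonempty ∧ ∀ p ∈ S, ∀ q ∈ S,
    Relation.ReflTransGen (fun a b => a ∈ S ∧ b ∈ S ∧ Step a b) p q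

/-! ### Auxiliary machinery -/

/-- The connectivity relation inside `Q m i`. -/
def R (m i : ℤ) (a b : P3) : Prop := a ∈ Q m i ∧ b ∈ Q m i ∧ Step a b

lemma step_symm {p q : P3} (h : Step p q) : Step q p := by
  obtain ⟨v, hv, rfl⟩ := h
  refine ⟨-v, ?_, by abel⟩
  simp only [unitVecs, Set.mem_insert_iff, Set.mem_singleton_iff] at hv ⊢
  rcases hv with rfl|rfl|rfl|rfl|rfl|rfl <;> simp [Prod.ext_iff]

lemma step_x (x y z : ℤ) : Step (x,y,z) (x+1,y,z) :=
  ⟨(1,0,0), by simp [unitVecs], by simp [Prod.ext_iff]⟩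

lemma step_y (x y z : ℤ) : Step (x,y,z) (x,y+1,z) :=
  ⟨(0,1,0), by simp [unitVecs], by simp [Prod.ext_iff]⟩

lemma step_z (x y z : ℤ) : Step (x,y,z) (x,y,z+1) :=
  ⟨(0,0,1), by simp [unitVecs], by simp [Prod.ext_iff]⟩

lemma R_symm {m i : ℤ} : Symmetric (R m i) := fun _ _ h => ⟨h.2.1, h.1, step_symm h.2.2⟩

lemma rtg_symm {m i : ℤ} {p q : P3} (h : Relation.ReflTransGen (R m i) p q) :
    Relation.ReflTransGen (R m i) q p :=
  (@Relation.ReflTransGen.stdSymm _ _ ⟨fun _ _ h => R_symm h⟩).symm _ _ h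

/-- Walk along a line inside `Q m i`. -/
lemma walk {m i : ℤ} (g : ℤ → P3) (hg : ∀ t, Step (g t) (g (t+1))) (a b : ℤ) (hab : a ≤ b)
    (hmem : ∀ t, a ≤ t → t ≤ b → g t ∈ Q m i) :
    Relation.ReflTransGen (R m i) (g a) (g b) := by
  refine Int.le_induction (motive := fun b _ => (∀ t, a ≤ t → t ≤ b → g t ∈ Q m i) →
      Relation.ReflTransGen (R m i) (g a) (g b)) (fun _ => .refl)
    (fun n hn ih hmem => (ih (fun t h1 h2 => hmem t h1 (by omega))).tail
      ⟨hmem n hn (by omega), hmem (n+1) (by omega) le_rfl, hg n⟩) b hab hmem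

/-- Walk along a line inside `Q m i`, in either direction. -/
lemma walk' {m i : ℤ} (g : ℤ → P3) (hg : ∀ t, Step (g t) (g (t+1))) (a b : ℤ)
    (hmem : ∀ t, min a b ≤ t → t ≤ max a b → g t ∈ Q m i) :
    Relation.ReflTransGen (R m i) (g a) (g b) := by
  rcases le_total a b with h | h
  · exact walk g hg a b h (fun t h1 h2 => hmem t (by omega) (by omega))
  · exact rtg_symm (walk g hg b a h (fun t h1 h2 => hmem t (by omega) (by omega)))

/-! Membership lemmas. -/

lemma memE {m i : ℤ} (hi : 1 ≤ i) (him : i ≤ m) {x y : ℤ}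
    (h1 : 1 ≤ x) (h2 : x ≤ m+1) (h3 : 1 ≤ y) (h4 : y ≤ m+1) : (x,y,i) ∈ Q m i := by
  refine ⟨?_, ?_⟩
  · simp only [cube, Set.mem_setOf_eq]; omega
  · simp only [f]; split_ifs <;> first | omega | (simp only [true_and, and_true] at *; omega)

lemma memC {m i : ℤ} (hi : 1 ≤ i) (him : i ≤ m) {z : ℤ}
    (h1 : 1 ≤ z) (h2 : z ≤ m) : (0,i,z) ∈ Q m i := by
  refine ⟨?_, ?_⟩
  · simp only [cube, Set.mem_setOf_eq]; omega
  · simp only [f]; split_ifs <;> first | omega | (simp only [true_and, and_true] at *; omega)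

lemma memA {m i : ℤ} (hi : 1 ≤ i) (him : i ≤ m) {x : ℤ}
    (h1 : 0 ≤ x) (h2 : x ≤ m) : (x,i,0) ∈ Q m i := by
  refine ⟨?_, ?_⟩
  · simp only [cube, Set.mem_setOf_eq]; omega
  · simp only [f]; split_ifs <;> first | omega | (simp only [true_and, and_true] at *; omega)

lemma memD {m i : ℤ} (hi : 1 ≤ i) (him : i ≤ m) {z : ℤ}
    (h1 : 1 ≤ z) (h2 : z ≤ m) : (i,0,z) ∈ Q m i := by
  refine ⟨?_, ?_⟩
  · simp only [cube, Set.mem_setOf_eq]; omega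
  · simp only [f]; split_ifs <;> first | omega | (simp only [true_and, and_true] at *; omega)

lemma memB {m i : ℤ} (hi : 1 ≤ i) (him : i ≤ m) {y : ℤ}
    (h1 : 0 ≤ y) (h2 : y ≤ m) : (i,y,m+1) ∈ Q m i := by
  refine ⟨?_, ?_⟩
  · simp only [cube, Set.mem_setOf_eq]; omega
  · simp only [f]; split_ifs <;> first | omega | (simp only [true_and, and_true] at *; omega)

/-! Paths to the base point `(1,1,i)`. -/

lemma pE {m i : ℤ} (hi : 1 ≤ i) (him : i ≤ m) {x y : ℤ}
    (h1 : 1 ≤ x) (h2 : x ≤ m+1) (h3 : 1 ≤ y) (h4 : y ≤ m+1) :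
    Relation.ReflTransGen (R m i) (x,y,i) (1,1,i) := by
  refine .trans (b := (1,y,i)) ?_ ?_
  · exact walk' (fun t => (t,y,i)) (fun t => step_x t y i) x 1
      (fun t ht1 ht2 => memE hi him (by omega) (by omega) h3 h4)
  · exact walk' (fun t => (1,t,i)) (fun t => step_y 1 t i) y 1
      (fun t ht1 ht2 => memE hi him le_rfl (by omega) (by omega) (by omega))

lemma pC {m i : ℤ} (hi : 1 ≤ i) (him : i ≤ m) {z : ℤ} (h1 : 1 ≤ z) (h2 : z ≤ m) :
    Relation.ReflTransGen (R m i) (0,i,z) (1,1,i) := by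
  refine .trans (b := (0,i,i)) ?_ (.head ?_ (pE hi him le_rfl (by omega) hi (by omega)))
  · exact walk' (fun t => (0,i,t)) (fun t => step_z 0 i t) z i
      (fun t ht1 ht2 => memC hi him (by omega) (by omega))
  · exact ⟨memC hi him hi him, memE hi him le_rfl (by omega) hi (by omega),
      by simpa using step_x 0 i i⟩

lemma pA {m i : ℤ} (hi : 1 ≤ i) (him : i ≤ m) {x : ℤ} (h1 : 0 ≤ x) (h2 : x ≤ m) :
    Relation.ReflTransGen (R m i) (x,i,0) (1,1,i) := by
  refine .trans (b := (0,i,0)) ?_ (.head ?_ (pC hi him le_rfl (hi.trans him)))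
  · exact walk' (fun t => (t,i,0)) (fun t => step_x t i 0) x 0
      (fun t ht1 ht2 => memA hi him (by omega) (by omega))
  · exact ⟨memA hi him le_rfl (by omega : (0:ℤ) ≤ m), memC hi him le_rfl (hi.trans him),
      by simpa using step_z 0 i 0⟩

lemma pD {m i : ℤ} (hi : 1 ≤ i) (him : i ≤ m) {z : ℤ} (h1 : 1 ≤ z) (h2 : z ≤ m) :
    Relation.ReflTransGen (R m i) (i,0,z) (1,1,i) := by
  refine .trans (b := (i,0,i)) ?_ (.head ?_ (pE hi him hi (by omega) le_rfl (by omega)))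
  · exact walk' (fun t => (i,0,t)) (fun t => step_z i 0 t) z i
      (fun t ht1 ht2 => memD hi him (by omega) (by omega))
  · exact ⟨memD hi him hi him, memE hi him hi (by omega) le_rfl (by omega),
      by simpa using step_y i 0 i⟩

lemma pB {m i : ℤ} (hi : 1 ≤ i) (him : i ≤ m) {y : ℤ} (h1 : 0 ≤ y) (h2 : y ≤ m) :
    Relation.ReflTransGen (R m i) (i,y,m+1) (1,1,i) := by
  refine .trans (b := (i,0,m+1)) ?_ (.head ?_ (pD hi him (by omega) le_rfl))
  · exact walk' (fun t => (i,t,m+1)) (fun t => step_y i t (m+1)) y 0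
      (fun t ht1 ht2 => memB hi him (by omega) (by omega))
  · refine ⟨memB hi him le_rfl (by omega), memD hi him (by omega) le_rfl,
      step_symm ?_⟩
    simpa using step_z i 0 m

/-! Extra regions present only for `i = 1`. -/

lemma mem1 {m : ℤ} (hm : 1 ≤ m) {x y z : ℤ} (hc : 0 ≤ x ∧ x ≤ m+1 ∧ 0 ≤ y ∧ y ≤ m+1 ∧ 0 ≤ z ∧ z ≤ m+1)
    (h : (y = 0 ∧ (x = 0 ∨ x = m+1 ∨ z = 0)) ∨
         (y = m+1 ∧ (x = 0 ∨ z = 0 ∨ z = m+1)) ∨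
         (x = m+1 ∧ (z = 0 ∨ z = m+1)) ∨ (x = 0 ∧ z = m+1)) :
    (x,y,z) ∈ Q m 1 := by
  refine ⟨?_, ?_⟩
  · simp only [cube, Set.mem_setOf_eq]; omega
  · simp only [f]; split_ifs <;> first | omega | (simp only [true_and, and_true] at *; omega)

lemma pL1 {m : ℤ} (hm : 1 ≤ m) {z : ℤ} (h1 : 1 ≤ z) (h2 : z ≤ m) :
    Relation.ReflTransGen (R m 1) (0,0,z) (1,1,1) := by
  refine .trans (b := (0,0,1)) ?_ (.head ?_ (pD le_rfl hm le_rfl hm))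
  · exact walk' (fun t => (0,0,t)) (fun t => step_z 0 0 t) z 1
      (fun t ht1 ht2 => mem1 hm (by omega) (by omega))
  · exact ⟨mem1 hm (by omega) (by omega), memD le_rfl hm le_rfl hm,
      by simpa using step_x 0 0 1⟩

lemma pL2 {m : ℤ} (hm : 1 ≤ m) {z : ℤ} (h1 : 1 ≤ z) (h2 : z ≤ m+1) :
    Relation.ReflTransGen (R m 1) (0,m+1,z) (1,1,1) := by
  refine .trans (b := (0,m+1,1)) ?_
    (.head ?_ (pE le_rfl hm le_rfl (by omega) (by omega) le_rfl))
  · exact walk' (fun t => (0,m+1,t)) (fun t => step_z 0 (m+1) t) z 1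
      (fun t ht1 ht2 => mem1 hm (by omega) (by omega))
  · exact ⟨mem1 hm (by omega) (by omega),
      memE le_rfl hm le_rfl (by omega) (by omega) le_rfl, by simpa using step_x 0 (m+1) 1⟩

lemma pL3 {m : ℤ} (hm : 1 ≤ m) {z : ℤ} (h1 : 1 ≤ z) (h2 : z ≤ m) :
    Relation.ReflTransGen (R m 1) (m+1,0,z) (1,1,1) := by
  refine .trans (b := (m+1,0,1)) ?_
    (.head ?_ (pE le_rfl hm (by omega) le_rfl le_rfl (by omega)))
  · exact walk' (fun t => (m+1,0,t)) (fun t => step_z (m+1) 0 t) z 1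
      (fun t ht1 ht2 => mem1 hm (by omega) (by omega))
  · exact ⟨mem1 hm (by omega) (by omega),
      memE le_rfl hm (by omega) le_rfl le_rfl (by omega), by simpa using step_y (m+1) 0 1⟩

lemma pZ0y0 {m : ℤ} (hm : 1 ≤ m) {x : ℤ} (h1 : 0 ≤ x) (h2 : x ≤ m+1) :
    Relation.ReflTransGen (R m 1) (x,0,0) (1,1,1) := by
  refine .trans (b := (0,0,0)) ?_ (.head ?_ (pL1 hm le_rfl hm))
  · exact walk' (fun t => (t,0,0)) (fun t => step_x t 0 0) x 0
      (fun t ht1 ht2 => mem1 hm (by omega) (by omega))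
  · exact ⟨mem1 hm (by omega) (by omega), mem1 hm (by omega) (by omega),
      by simpa using step_z 0 0 0⟩

lemma pZ0ym {m : ℤ} (hm : 1 ≤ m) {x : ℤ} (h1 : 0 ≤ x) (h2 : x ≤ m+1) :
    Relation.ReflTransGen (R m 1) (x,m+1,0) (1,1,1) := by
  refine .trans (b := (0,m+1,0)) ?_ (.head ?_ (pL2 hm le_rfl (by omega)))
  · exact walk' (fun t => (t,m+1,0)) (fun t => step_x t (m+1) 0) x 0
      (fun t ht1 ht2 => mem1 hm (by omega) (by omega))
  · exact ⟨mem1 hm (by omega) (by omega), mem1 hm (by omega) (by omega),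
      by simpa using step_z 0 (m+1) 0⟩

lemma pZ0xm {m : ℤ} (hm : 1 ≤ m) {y : ℤ} (h1 : 0 ≤ y) (h2 : y ≤ m+1) :
    Relation.ReflTransGen (R m 1) (m+1,y,0) (1,1,1) := by
  refine .trans (b := (m+1,0,0)) ?_ (pZ0y0 hm (by omega) le_rfl)
  · exact walk' (fun t => (m+1,t,0)) (fun t => step_y (m+1) t 0) y 0
      (fun t ht1 ht2 => mem1 hm (by omega) (by omega))

lemma pZTx0 {m : ℤ} (hm : 1 ≤ m) {y : ℤ} (h1 : 0 ≤ y) (h2 : y ≤ m+1) :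
    Relation.ReflTransGen (R m 1) (0,y,m+1) (1,1,1) := by
  refine .trans (b := (0,0,m+1)) ?_ (.head ?_ (pL1 hm hm le_rfl))
  · exact walk' (fun t => (0,t,m+1)) (fun t => step_y 0 t (m+1)) y 0
      (fun t ht1 ht2 => mem1 hm (by omega) (by omega))
  · exact ⟨mem1 hm (by omega) (by omega), mem1 hm (by omega) (by omega),
      step_symm (by simpa using step_z 0 0 m)⟩

lemma pZTxm {m : ℤ} (hm : 1 ≤ m) {y : ℤ} (h1 : 0 ≤ y) (h2 : y ≤ m+1) :
    Relation.ReflTransGen (R m 1) (m+1,y,m+1) (1,1,1) := by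
  refine .trans (b := (m+1,0,m+1)) ?_ (.head ?_ (pL3 hm hm le_rfl))
  · exact walk' (fun t => (m+1,t,m+1)) (fun t => step_y (m+1) t (m+1)) y 0
      (fun t ht1 ht2 => mem1 hm (by omega) (by omega))
  · exact ⟨mem1 hm (by omega) (by omega), mem1 hm (by omega) (by omega),
      step_symm (by simpa using step_z (m+1) 0 m)⟩

lemma pZTym {m : ℤ} (hm : 1 ≤ m) {x : ℤ} (h1 : 0 ≤ x) (h2 : x ≤ m+1) :
    Relation.ReflTransGen (R m 1) (x,m+1,m+1) (1,1,1) := by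
  refine .trans (b := (0,m+1,m+1)) ?_ (.head ?_ (pL2 hm hm (by omega)))
  · exact walk' (fun t => (t,m+1,m+1)) (fun t => step_x t (m+1) (m+1)) x 0
      (fun t ht1 ht2 => mem1 hm (by omega) (by omega))
  · exact ⟨mem1 hm (by omega) (by omega), mem1 hm (by omega) (by omega),
      step_symm (by simpa using step_z 0 (m+1) m)⟩

/-- Every point of `Q m i` is connected to the base point `(1,1,i)`. -/
lemma toBase {m i : ℤ} (hm : 1 ≤ m) (hi : 1 ≤ i) (him : i ≤ m) {p : P3} (hp : p ∈ Q m i) :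
    Relation.ReflTransGen (R m i) p (1,1,i) := by
  obtain ⟨x, y, z⟩ := p
  obtain ⟨hc, hf⟩ := hp
  simp only [cube, Set.mem_setOf_eq] at hc
  simp only [f] at hf
  split_ifs at hf with h1 h2 h3 h4 h5
  · -- region A : z = 0, y = i
    obtain ⟨_, _, _, _, rfl⟩ := h1
    subst hf
    exact pA hi him (by omega) (by omega)
  · -- region B : z = m+1, x = i
    obtain ⟨_, _, _, _, hz⟩ := h2
    subst hf; subst hz
    exact pB hi him (by omega) (by omega)
  · -- region C : x = 0, y = i
    obtain ⟨hx, _, _, _, _⟩ := h3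
    subst hf; subst hx
    exact pC hi him (by omega) (by omega)
  · -- region D : y = 0, x = i
    obtain ⟨_, _, hy, _, _⟩ := h4
    subst hf; subst hy
    exact pD hi him (by omega) (by omega)
  · -- region E : z = i
    subst hf
    exact pE hi him (by omega) (by omega) (by omega) (by omega)
  · -- leftover : i = 1
    subst hf
    have hz : z = 0 ∨ (1 ≤ z ∧ z ≤ m) ∨ z = m + 1 := by omega
    rcases hz with rfl | ⟨hz1, hz2⟩ | rfl
    · have : y = 0 ∨ y = m + 1 ∨ x = m + 1 := by omega
      rcases this with rfl | rfl | rfl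
      · exact pZ0y0 hm (by omega) (by omega)
      · exact pZ0ym hm (by omega) (by omega)
      · exact pZ0xm hm (by omega) (by omega)
    · have : x = 0 ∨ y = 0 := by omega
      rcases this with rfl | rfl
      · have : y = 0 ∨ y = m + 1 := by
          simp only [eq_self_iff_true, true_and] at h3; omega
        rcases this with rfl | rfl
        · exact pL1 hm hz1 hz2
        · exact pL2 hm hz1 (by omega)
      · have : x = 0 ∨ x = m + 1 := by
          simp only [eq_self_iff_true, true_and, and_true] at h4; omega
        rcases this with rfl | rfl
        · exact pL1 hm hz1 hz2
        · exact pL3 hm hz1 hz2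
    · have : x = 0 ∨ x = m + 1 ∨ y = m + 1 := by omega
      rcases this with rfl | rfl | rfl
      · exact pZTx0 hm (by omega) (by omega)
      · exact pZTxm hm (by omega) (by omega)
      · exact pZTym hm (by omega) (by omega)

/-- Each part Q_i of the partition of the cube is a connected polycube. -/
theorem stmt3 (m : ℤ) (hm : 1 ≤ m) (i : ℤ) (hi : 1 ≤ i) (him : i ≤ m) :
    IsConnectedPolycube (Q m i) := by
  constructor
  · exact ⟨(1,1,i), memE hi him le_rfl (by omega) le_rfl (by omega)⟩
  · intro p hp q hq
    exact .trans (toBase hm hi him hp) (rtg_symm (toBase hm hi him hq))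
end

section
/- Every cyclic domino problem with nonempty horizontal and vertical relation sets is solvable: if R₁, R₂ ⊆ (ℤ_n)² are nonempty and closed under diagonal shifts ((a,b) ∈ R_i implies (a+k, b+k) ∈ R_i for all k ∈ ℤ_n), then there exists a function T : ℤ² → ℤ_n such that (T(s), T(s+e₁)) ∈ R₁ and (T(s), T(s+e₂)) ∈ R₂ for every s ∈ ℤ². -/
/-- Every cyclic domino problem with nonempty relation sets is solvable. -/
theorem stmt6 (n : ℕ) (hn : 1 ≤ n)
    (R₁ R₂ : Set (ZMod n × ZMod n)) (h1 : R₁.Nonempty) (h2 : R₂.Nonempty)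
    (hc1 : ∀ a b k : ZMod n, (a, b) ∈ R₁ → (a + k, b + k) ∈ R₁)
    (hc2 : ∀ a b k : ZMod n, (a, b) ∈ R₂ → (a + k, b + k) ∈ R₂) :
    ∃ T : ℤ × ℤ → ZMod n, ∀ s : ℤ × ℤ,
      (T s, T (s + (1, 0))) ∈ R₁ ∧ (T s, T (s + (0, 1))) ∈ R₂ := by
  obtain ⟨⟨a₁, b₁⟩, hR1⟩ := h1
  obtain ⟨⟨a₂, b₂⟩, hR2⟩ := h2
  refine ⟨fun s => (s.1 : ZMod n) * (b₁ - a₁) + (s.2 : ZMod n) * (b₂ - a₂), fun s => ⟨?_, ?_⟩⟩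
  · have := hc1 a₁ b₁ ((s.1 : ZMod n) * (b₁ - a₁) + (s.2 : ZMod n) * (b₂ - a₂) - a₁) hR1
    simpa [Prod.fst_add, Prod.snd_add, add_mul, Int.cast_add] using
      (by convert this using 2 <;> push_cast <;> ring)
  · have := hc2 a₂ b₂ ((s.1 : ZMod n) * (b₁ - a₁) + (s.2 : ZMod n) * (b₂ - a₂) - a₂) hR2
    simpa using (by convert this using 2 <;> push_cast <;> ring)
end

section
/- Fix s ∈ ℤ². If the L-triomino condition p(s,i) holds for some 1 ≤ i ≤ 4, then p(s,i) holds for all 1 ≤ i ≤ 4. Here p(s,i) states (T(s), T(s+u_i), T(s+u_{i+1})) ∈ L, where T is any solution to the S-cyclic triomino problem and L = {(w,0,0) : 1 ≤ w ≤ m} (embedded in ℤ_n³ with n ≥ 2m+1). -/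
abbrev T3 (n : ℕ) := ZMod n × ZMod n × ZMod n

/-- L = {(w,0,0) : 1 ≤ w ≤ m} ⊂ ℤ_n³. -/
def Ltri (n m : ℕ) : Set (T3 n) :=
  {t | ∃ w : ℕ, 1 ≤ w ∧ w ≤ m ∧ t = ((w : ZMod n), 0, 0)}

/-- Representatives K₁, K₂, K₃, K₄ (indexed mod 4, K_{4q+r} = K_r). -/
def Ktri (n m : ℕ) (R₁ R₂ : Set (ℕ × ℕ)) (i : ℕ) : Set (T3 n) :=
  Ltri n m ∪
  (match i % 4 with
   | 1 => {t | ∃ a b : ℕ, (a, b) ∈ R₁ ∧ t = (0, (b : ZMod n), (a : ZMod n))}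
   | 2 => {t | ∃ a b : ℕ, (a, b) ∈ R₂ ∧ t = (0, (a : ZMod n), (b : ZMod n))}
   | 3 => {t | ∃ a b : ℕ, (a, b) ∈ R₁ ∧ t = (0, (a : ZMod n), (b : ZMod n))}
   | _ => {t | ∃ a b : ℕ, (a, b) ∈ R₂ ∧ t = (0, (b : ZMod n), (a : ZMod n))})

/-- The cyclic triomino relations S_i: all diagonal shifts of K_i. -/
def Stri (n m : ℕ) (R₁ R₂ : Set (ℕ × ℕ)) (i : ℕ) : Set (T3 n) :=
  {t | ∃ k : ZMod n, ∃ s ∈ Ktri n m R₁ R₂ i, t = (s.1 + k, s.2.1 + k, s.2.2 + k)}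

/-- u₁ = (1,0), u₂ = (0,1), u₃ = (-1,0), u₄ = (0,-1), extended periodically. -/
def u (i : ℕ) : ℤ × ℤ :=
  match i % 4 with
  | 1 => (1, 0)
  | 2 => (0, 1)
  | 3 => (-1, 0)
  | _ => (0, -1)

/-- T is a solution to the S-cyclic triomino problem. -/
def IsTriSolution (n m : ℕ) (R₁ R₂ : Set (ℕ × ℕ)) (T : ℤ × ℤ → ZMod n) : Prop :=
  ∀ s : ℤ × ℤ, ∀ i : ℕ, 1 ≤ i → i ≤ 4 →
    (T s, T (s + u i), T (s + u (i + 1))) ∈ Stri n m R₁ R₂ i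

lemma key (m n : ℕ) (hn : 2 * m + 1 ≤ n)
    (R₁ R₂ : Set (ℕ × ℕ))
    (hR1 : ∀ p ∈ R₁, 1 ≤ p.1 ∧ p.1 ≤ m ∧ 1 ≤ p.2 ∧ p.2 ≤ m)
    (hR2 : ∀ p ∈ R₂, 1 ≤ p.1 ∧ p.1 ≤ m ∧ 1 ≤ p.2 ∧ p.2 ≤ m)
    (j : ℕ) (x y z : ZMod n)
    (hx : ∃ w : ℕ, 1 ≤ w ∧ w ≤ m ∧ x = (w : ZMod n))
    (hS : (x, y, z) ∈ Stri n m R₁ R₂ j)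
    (h0 : y = 0 ∨ z = 0) : (x, y, z) ∈ Ltri n m := by
  haveI : NeZero n := ⟨by omega⟩
  obtain ⟨w, hw1, hw2, hxw⟩ := hx
  obtain ⟨k, t, ht, heq⟩ := hS
  obtain ⟨hx', hy', hz'⟩ : x = t.1 + k ∧ y = t.2.1 + k ∧ z = t.2.2 + k := by
    simpa [Prod.ext_iff] using heq
  rcases ht with hL | hm2
  · obtain ⟨w', h1, h2, h3⟩ := hL
    rw [h3] at hx' hy' hz'
    simp only at hx' hy' hz'
    have hk : k = 0 := by
      rcases h0 with h | h
      · rw [hy'] at h; simpa using h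
      · rw [hz'] at h; simpa using h
    exact ⟨w', h1, h2, by simp [hx', hy', hz', hk, Prod.ext_iff]⟩
  · exfalso
    have h4 : j % 4 = 0 ∨ j % 4 = 1 ∨ j % 4 = 2 ∨ j % 4 = 3 := by omega
    have hpq : ∃ p q : ℕ, 1 ≤ p ∧ p ≤ m ∧ 1 ≤ q ∧ q ≤ m ∧
        t = (0, (p : ZMod n), (q : ZMod n)) := by
      rcases h4 with h | h | h | h <;> rw [h] at hm2 <;>
        obtain ⟨a, b, hab, ht⟩ := hm2
      · exact ⟨b, a, (hR2 _ hab).2.2.1, (hR2 _ hab).2.2.2, (hR2 _ hab).1, (hR2 _ hab).2.1, ht⟩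
      · exact ⟨b, a, (hR1 _ hab).2.2.1, (hR1 _ hab).2.2.2, (hR1 _ hab).1, (hR1 _ hab).2.1, ht⟩
      · exact ⟨a, b, (hR2 _ hab).1, (hR2 _ hab).2.1, (hR2 _ hab).2.2.1, (hR2 _ hab).2.2.2, ht⟩
      · exact ⟨a, b, (hR1 _ hab).1, (hR1 _ hab).2.1, (hR1 _ hab).2.2.1, (hR1 _ hab).2.2.2, ht⟩
    obtain ⟨p, q, hp1, hp2, hq1, hq2, ht⟩ := hpq
    rw [ht] at hx' hy' hz'
    simp only at hx' hy' hz'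
    have hk : k = (w : ZMod n) := by
      rw [hxw] at hx'
      have h' : (w : ZMod n) = k := by simpa using hx'
      exact h'.symm
    rw [hk] at hy' hz'
    have hlt : ∀ r : ℕ, 1 ≤ r → r ≤ m → ((r : ZMod n) + (w : ZMod n) ≠ 0) := by
      intro r hr1 hr2
      rw [← Nat.cast_add, Ne, ZMod.natCast_eq_zero_iff]
      intro hd
      have := Nat.le_of_dvd (by omega) hd
      omega
    rcases h0 with h | h
    · exact hlt p hp1 hp2 (hy' ▸ h)
    · exact hlt q hq1 hq2 (hz' ▸ h)

/-- If p(s,i) holds for some 1 ≤ i ≤ 4, then it holds for all 1 ≤ i ≤ 4. -/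
theorem stmt7 (m n : ℕ) (hm : 1 ≤ m) (hn : 2 * m + 1 ≤ n)
    (R₁ R₂ : Set (ℕ × ℕ))
    (hR1 : ∀ p ∈ R₁, 1 ≤ p.1 ∧ p.1 ≤ m ∧ 1 ≤ p.2 ∧ p.2 ≤ m)
    (hR2 : ∀ p ∈ R₂, 1 ≤ p.1 ∧ p.1 ≤ m ∧ 1 ≤ p.2 ∧ p.2 ≤ m)
    (T : ℤ × ℤ → ZMod n) (hT : IsTriSolution n m R₁ R₂ T) (s : ℤ × ℤ)
    (h : ∃ i : ℕ, 1 ≤ i ∧ i ≤ 4 ∧ (T s, T (s + u i), T (s + u (i + 1))) ∈ Ltri n m) :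
    ∀ i : ℕ, 1 ≤ i → i ≤ 4 → (T s, T (s + u i), T (s + u (i + 1))) ∈ Ltri n m := by
  have h1 : (T s, T (s + u 1), T (s + u 2)) ∈ Stri n m R₁ R₂ 1 := hT s 1 (by norm_num) (by norm_num)
  have h2 : (T s, T (s + u 2), T (s + u 3)) ∈ Stri n m R₁ R₂ 2 := hT s 2 (by norm_num) (by norm_num)
  have h3 : (T s, T (s + u 3), T (s + u 4)) ∈ Stri n m R₁ R₂ 3 := hT s 3 (by norm_num) (by norm_num)
  have h4 : (T s, T (s + u 4), T (s + u 1)) ∈ Stri n m R₁ R₂ 4 := hT s 4 (by norm_num) (by norm_num)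
  have hz : ∀ a b c : ZMod n, (a, b, c) ∈ Ltri n m → b = 0 ∧ c = 0 := by
    rintro a b c ⟨w, _, _, hc⟩
    simp only [Prod.ext_iff] at hc
    exact ⟨hc.2.1, hc.2.2⟩
  obtain ⟨i, hi1, hi4, hL⟩ := h
  have hx : ∃ w : ℕ, 1 ≤ w ∧ w ≤ m ∧ T s = (w : ZMod n) := by
    obtain ⟨w, hw1, hw2, hc⟩ := hL
    simp only [Prod.ext_iff] at hc
    exact ⟨w, hw1, hw2, hc.1⟩
  have hzero : T (s + u 1) = 0 ∧ T (s + u 2) = 0 ∧ T (s + u 3) = 0 ∧ T (s + u 4) = 0 := by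
    interval_cases i
    · obtain ⟨hA, hB⟩ := hz _ _ _ hL
      have hC := (hz _ _ _ (key m n hn R₁ R₂ hR1 hR2 2 _ _ _ hx h2 (Or.inl hB))).2
      have hD := (hz _ _ _ (key m n hn R₁ R₂ hR1 hR2 3 _ _ _ hx h3 (Or.inl hC))).2
      exact ⟨hA, hB, hC, hD⟩
    · obtain ⟨hB, hC⟩ := hz _ _ _ hL
      have hD := (hz _ _ _ (key m n hn R₁ R₂ hR1 hR2 3 _ _ _ hx h3 (Or.inl hC))).2
      have hA := (hz _ _ _ (key m n hn R₁ R₂ hR1 hR2 4 _ _ _ hx h4 (Or.inl hD))).2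
      exact ⟨hA, hB, hC, hD⟩
    · obtain ⟨hC, hD⟩ := hz _ _ _ hL
      have hA := (hz _ _ _ (key m n hn R₁ R₂ hR1 hR2 4 _ _ _ hx h4 (Or.inl hD))).2
      have hB := (hz _ _ _ (key m n hn R₁ R₂ hR1 hR2 1 _ _ _ hx h1 (Or.inl hA))).2
      exact ⟨hA, hB, hC, hD⟩
    · obtain ⟨hD, hA⟩ := hz _ _ _ hL
      have hB := (hz _ _ _ (key m n hn R₁ R₂ hR1 hR2 1 _ _ _ hx h1 (Or.inl hA))).2
      have hC := (hz _ _ _ (key m n hn R₁ R₂ hR1 hR2 2 _ _ _ hx h2 (Or.inl hB))).2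
      exact ⟨hA, hB, hC, hD⟩
  intro j hj1 hj4
  interval_cases j
  · exact key m n hn R₁ R₂ hR1 hR2 1 _ _ _ hx h1 (Or.inl hzero.1)
  · exact key m n hn R₁ R₂ hR1 hR2 2 _ _ _ hx h2 (Or.inl hzero.2.1)
  · exact key m n hn R₁ R₂ hR1 hR2 3 _ _ _ hx h3 (Or.inl hzero.2.2.1)
  · exact key m n hn R₁ R₂ hR1 hR2 4 _ _ _ hx h4 (Or.inl hzero.2.2.2)
end

section
/- Key shift-detection step: Let n ≥ 2m+1 and let K ⊆ ℤ_n³ satisfy K = L ∪ K' where L = {(w,0,0) : 1 ≤ w ≤ m} and every (a,b,c) ∈ K' has a = 0 and 1 ≤ b,c ≤ m (viewed in {0,...,n-1}). If a triple (x,y,z) ∈ ℤ_n³ equals (a+k, b+k, c+k) for some (a,b,c) ∈ K and k ∈ ℤ_n, and additionally x - y (computed in ℤ_n as a representative in {0,...,n-1}) satisfies 1 ≤ x - y ≤ m and y = 0, then (x,y,z) ∈ L. -/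
/-- Shift-detection: if K = L ∪ K' where every triple of K' has first entry 0 and second
and third entries in {1,...,m}, and (x,y,z) is a diagonal shift of an element of K with
1 ≤ (x-y).val ≤ m and y = 0, then (x,y,z) ∈ L. -/
theorem stmt8 (n m : ℕ) (hm : 1 ≤ m) (hn : 2 * m + 1 ≤ n)
    (K' : Set (T3 n))
    (hK' : ∀ t ∈ K', t.1 = 0 ∧ ∃ b c : ℕ,
      1 ≤ b ∧ b ≤ m ∧ 1 ≤ c ∧ c ≤ m ∧ t.2.1 = (b : ZMod n) ∧ t.2.2 = (c : ZMod n))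
    (K : Set (T3 n)) (hK : K = Ltri n m ∪ K')
    (x y z : ZMod n)
    (hrep : ∃ k : ZMod n, ∃ t ∈ K, (x, y, z) = (t.1 + k, t.2.1 + k, t.2.2 + k))
    (hdiff : 1 ≤ (x - y).val ∧ (x - y).val ≤ m) (hy : y = 0) :
    (x, y, z) ∈ Ltri n m := by
  haveI : NeZero n := ⟨by omega⟩
  obtain ⟨k, t, htK, heq⟩ := hrep
  rw [hK] at htK
  rcases htK with hL | hK'mem
  · obtain ⟨w, hw1, hw2, ht⟩ := hL
    rw [ht] at heq
    simp only [Prod.mk.injEq] at heq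
    obtain ⟨hx, hy', hz⟩ := heq
    have hk0 : k = 0 := by rw [hy'] at hy; simpa using hy
    exact ⟨w, hw1, hw2, by simp [hx, hy', hz, hk0]⟩
  · exfalso
    obtain ⟨ht1, b, c, hb1, hb2, hc1, hc2, htb, htc⟩ := hK' t hK'mem
    simp only [Prod.mk.injEq] at heq
    obtain ⟨hx, hy', hz⟩ := heq
    have hxy : x - y = -(b : ZMod n) := by
      rw [hx, hy', ht1, htb]; ring
    have hbn : b < n := by omega
    have hbval : ((b : ZMod n)).val = b := ZMod.val_cast_of_lt hbn
    have hbne : (b : ZMod n) ≠ 0 := by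
      intro h
      have := ZMod.val_cast_of_lt hbn
      rw [h] at this
      simp at this
      omega
    have : (x - y).val = n - b := by
      rw [hxy, ZMod.neg_val]
      simp [hbne, hbval]
    omega
end

section
/- Tower decomposition identity: Let gcd(n,6)=1 and a ∈ ℤ with 0 ≤ a ≤ n-1. With α_T = ⋃_{i=0}^{n-1}(n·α_{δ(i)} + 6i) where δ(i) = [i = 0], we have 6nℤ ⊕ (α_T + 6a) = ⋃_{i=0}^{n-1} ((6nℤ + 6i) ⊕ n·α_{δ(i-a)}), where indices i - a are taken mod n. -/
/-- Minkowski sum of subsets of ℤ. -/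
def mink (A B : Set ℤ) : Set ℤ := {z | ∃ a ∈ A, ∃ b ∈ B, z = a + b}

/-- P tiles E by translations: some W with W ⊕ P = E, non-overlapping. -/
def Tiles1 (P E : Set ℤ) : Prop :=
  ∃ W : Set ℤ, mink W P = E ∧
    ∀ w₁ ∈ W, ∀ p₁ ∈ P, ∀ w₂ ∈ W, ∀ p₂ ∈ P, w₁ + p₁ = w₂ + p₂ → w₁ = w₂ ∧ p₁ = p₂

def alphaB : Fin 2 → Set ℤ := fun i => if i = 1 then {0, 5} else ∅
def betaB : Fin 2 → Set ℤ := fun i => if i = 1 then ∅ else {1, 4}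
def gammaB : Fin 2 → Set ℤ := fun i => if i = 1 then {2, 3} else ∅

/-- Multiples of d. -/
def multZ (d : ℤ) : Set ℤ := {z | ∃ k : ℤ, z = d * k}

def tower (X : Fin 2 → Set ℤ) (n : ℕ) : Set ℤ :=
  {z | ∃ i : ℕ, i < n ∧ ∃ a ∈ X (if i = 0 then 1 else 0), z = (n : ℤ) * a + 6 * i}

/-- δ(j) = 1 if j ≡ 0 (mod n), else 0. -/
def deltaM (n : ℕ) (j : ℤ) : Fin 2 := if (j : ZMod n) = 0 then 1 else 0

def scaleZ (n : ℤ) (A : Set ℤ) : Set ℤ := (fun x => n * x) '' A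

/-- Tower decomposition: 6nℤ ⊕ (α_T + 6a) = ⋃_{i<n} ((6nℤ + 6i) ⊕ n·α_{δ(i-a)}). -/
theorem stmt12 (n : ℕ) (hn : 1 ≤ n) (hgcd : Nat.gcd n 6 = 1) (a : ℤ)
    (ha : 0 ≤ a ∧ a ≤ (n : ℤ) - 1) :
    mink (multZ (6 * n)) ((· + 6 * a) '' tower alphaB n) =
      {z | ∃ i : ℕ, i < n ∧
        z ∈ mink ((· + 6 * (i : ℤ)) '' multZ (6 * n))
          (scaleZ n (alphaB (deltaM n ((i : ℤ) - a))))} := by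

  obtain ⟨ha0, ha1⟩ := ha
  have key : ∀ i : ℕ, i < n → (deltaM n ((i : ℤ) - a) = 1 ↔ (i : ℤ) = a) := by
    intro i hi
    unfold deltaM
    constructor
    · intro h
      split_ifs at h with hz
      · have hd : (n : ℤ) ∣ ((i : ℤ) - a) := by
          have := (ZMod.intCast_zmod_eq_zero_iff_dvd ((i:ℤ) - a) n).mp (by exact_mod_cast hz)
          exact_mod_cast this
        have := Int.eq_zero_of_abs_lt_dvd hd (by
          have : (i : ℤ) < n := by exact_mod_cast hi
          rw [abs_lt]; omega)
        omega
      · exact absurd h (by decide)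
    · intro h
      rw [if_pos (by rw [h]; simp)]
  ext z
  constructor
  · rintro ⟨w, ⟨k, rfl⟩, b, ⟨t, ⟨i, hi, α, hα, rfl⟩, rfl⟩, rfl⟩
    by_cases hi0 : i = 0
    · subst hi0
      simp only [if_pos rfl, alphaB, if_pos rfl] at hα
      refine ⟨a.toNat, by omega, 6 * n * k + 6 * a, ⟨6 * n * k, ⟨k, rfl⟩, by push_cast; omega⟩,
        (n : ℤ) * α, ⟨α, ?_, rfl⟩, by push_cast; ring⟩
      rw [(key a.toNat (by omega)).mpr (by omega)]
      simpa [alphaB] using hα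
    · simp [alphaB, hi0] at hα
  · rintro ⟨i, hi, w, ⟨m, ⟨k, rfl⟩, rfl⟩, b, ⟨α, hα, rfl⟩, rfl⟩
    have hd : deltaM n ((i : ℤ) - a) = 1 := by
      by_contra h
      have : deltaM n ((i : ℤ) - a) = 0 := by omega
      rw [this] at hα
      simp [alphaB] at hα
    rw [hd] at hα
    have hia : (i : ℤ) = a := (key i hi).mp hd
    refine ⟨6 * n * k, ⟨k, rfl⟩, (n : ℤ) * α + 6 * a,
      ⟨(n : ℤ) * α, ⟨0, hn, α, by simpa [alphaB] using hα, by push_cast; ring⟩, rfl⟩,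
      by rw [← hia]; ring⟩
end

section
/- Tower obstruction: Let gcd(n,6)=1 and a,b,c ∈ ℤ. With towers α_T, β_T, γ_T built from blockers α₀=∅, α₁={0,5}, β₀={1,4}, β₁=∅, γ₀=∅, γ₁={2,3} via X_T = ⋃_{i=0}^{n-1}(n·X_{δ(i)} + 6i), the tile nD = {0,n} tiles the set S' = ℤ \ (6nℤ ⊕ ((α_T + 6a) ∪ (β_T + 6b) ∪ (γ_T + 6c))) if and only if NOT(a ≡ b ≡ c (mod n)). -/
namespace Stmt13Aux

def pat : Bool → Bool → Bool → List (ZMod 6)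
  | true, true, true => []
  | true, true, false => [1, 3]
  | true, false, true => []
  | true, false, false => [2]
  | false, true, true => [0, 4]
  | false, true, false => [0, 2, 4]
  | false, false, true => [5]
  | false, false, false => [2, 5]

def blk (x y z : Bool) : List (ZMod 6) :=
  (if x then [0, 5] else []) ++ (if y then [] else [1, 4]) ++ (if z then [2, 3] else [])

lemma patL1 : ∀ x y z : Bool, ¬(x = true ∧ y = true ∧ z = true) →
    ∀ T : ZMod 6, (T ∈ pat x y z ∨ T - 1 ∈ pat x y z) ↔ T ∉ blk x y z := by decide

lemma patL2 : ∀ x y z : Bool, ∀ T : ZMod 6, T ∈ pat x y z → T + 1 ∈ pat x y z → False := by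
  decide

lemma mem_blk_iff (x y z : Bool) (T : ZMod 6) :
    T ∈ blk x y z ↔
      ((T = 0 ∨ T = 5) ∧ x = true ∨ (T = 1 ∨ T = 4) ∧ y = false ∨
        (T = 2 ∨ T = 3) ∧ z = true) := by
  cases x <;> cases y <;> cases z <;> simp [blk] <;> tauto

lemma nsq (n : ℕ) (hgcd : Nat.gcd n 6 = 1) : (n : ZMod 6) * (n : ZMod 6) = 1 := by
  have h6 : Nat.gcd (n % 6) 6 = 1 := by
    rwa [Nat.gcd_comm, Nat.gcd_rec] at hgcd
  have hcast : (n : ZMod 6) = ((n % 6 : ℕ) : ZMod 6) := (ZMod.natCast_mod n 6).symm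
  have hlt : n % 6 = 0 ∨ n % 6 = 1 ∨ n % 6 = 2 ∨ n % 6 = 3 ∨ n % 6 = 4 ∨ n % 6 = 5 := by
    omega
  rcases hlt with h | h | h | h | h | h
  · rw [h] at h6; exact absurd h6 (by decide)
  · rw [h] at hcast; rw [hcast]; push_cast; decide
  · rw [h] at h6; exact absurd h6 (by decide)
  · rw [h] at h6; exact absurd h6 (by decide)
  · rw [h] at h6; exact absurd h6 (by decide)
  · rw [h] at hcast; rw [hcast]; push_cast; decide

/-- The "blocked" predicate on (n·z mod 6, z mod n). -/
def Bh (n : ℕ) (a b c : ℤ) (z : ℤ) : Prop :=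
  ((((n : ℤ) * z : ℤ) : ZMod 6) = 0 ∨ (((n : ℤ) * z : ℤ) : ZMod 6) = 5) ∧
      ((z : ZMod n) = ((6 * a : ℤ) : ZMod n)) ∨
    ((((n : ℤ) * z : ℤ) : ZMod 6) = 1 ∨ (((n : ℤ) * z : ℤ) : ZMod 6) = 4) ∧
      ((z : ZMod n) ≠ ((6 * b : ℤ) : ZMod n)) ∨
    ((((n : ℤ) * z : ℤ) : ZMod 6) = 2 ∨ (((n : ℤ) * z : ℤ) : ZMod 6) = 3) ∧
      ((z : ZMod n) = ((6 * c : ℤ) : ZMod n))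

lemma T_val (n : ℕ) (hgcd : Nat.gcd n 6 = 1) (x A m : ℤ) (v : ZMod 6)
    (h : (n : ℤ) * x = (n : ℤ) * (n : ℤ) * A + 6 * m)
    (hv : ((A : ℤ) : ZMod 6) = v) :
    (((n : ℤ) * x : ℤ) : ZMod 6) = v := by
  have h2 := nsq n hgcd
  have h60 : (6 : ZMod 6) = 0 := by decide
  rw [← hv, h]; push_cast
  linear_combination ((A : ZMod 6)) * h2 + ((m : ZMod 6)) * h60

lemma S_eq (n : ℕ) (x B m : ℤ) (h : x = B + (n : ℤ) * m) :
    ((x : ℤ) : ZMod n) = ((B : ℤ) : ZMod n) := by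
  rw [h]; push_cast
  simp [ZMod.natCast_self]

lemma key (n : ℕ) (hn : 1 ≤ n) (hgcd : Nat.gcd n 6 = 1) (z x : ℤ)
    (h6 : (((n : ℤ) * z : ℤ) : ZMod 6) = (((n : ℤ) * x : ℤ) : ZMod 6))
    (hns : ((z : ℤ) : ZMod n) = ((x : ℤ) : ZMod n)) :
    ∃ k : ℤ, z = 6 * (n : ℤ) * k + x := by
  have h2 := nsq n hgcd
  have hz6 : ((z : ℤ) : ZMod 6) = ((x : ℤ) : ZMod 6) := by
    push_cast at h6
    calc ((z : ℤ) : ZMod 6) = ((n : ZMod 6) * (n : ZMod 6)) * ((z : ℤ) : ZMod 6) := by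
          rw [h2, one_mul]
      _ = (n : ZMod 6) * ((n : ZMod 6) * ((z : ℤ) : ZMod 6)) := by ring
      _ = (n : ZMod 6) * ((n : ZMod 6) * ((x : ℤ) : ZMod 6)) := by rw [h6]
      _ = ((n : ZMod 6) * (n : ZMod 6)) * ((x : ℤ) : ZMod 6) := by ring
      _ = ((x : ℤ) : ZMod 6) := by rw [h2, one_mul]
  have d6 : (6 : ℤ) ∣ z - x := by
    have hz : ((z - x : ℤ) : ZMod 6) = 0 := by push_cast; rw [hz6]; ring
    exact_mod_cast (ZMod.intCast_zmod_eq_zero_iff_dvd (z - x) 6).mp hz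
  have dn : ((n : ℕ) : ℤ) ∣ z - x := by
    have hz : ((z - x : ℤ) : ZMod n) = 0 := by push_cast; rw [hns]; ring
    exact (ZMod.intCast_zmod_eq_zero_iff_dvd (z - x) n).mp hz
  have hcop : IsCoprime (6 : ℤ) ((n : ℕ) : ℤ) := by
    have h : IsCoprime ((6 : ℕ) : ℤ) ((n : ℕ) : ℤ) :=
      Nat.isCoprime_iff_coprime.mpr (Nat.coprime_comm.mp hgcd)
    exact_mod_cast h
  obtain ⟨k, hk⟩ := hcop.mul_dvd d6 dn
  exact ⟨k, by linarith⟩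

lemma six_inv (n : ℕ) (hgcd : Nat.gcd n 6 = 1) :
    (6 : ZMod n) * (6 : ZMod n)⁻¹ = 1 := by
  have h : ((6 : ℕ) : ZMod n) * ((6 : ℕ) : ZMod n)⁻¹ = 1 :=
    ZMod.coe_mul_inv_eq_one 6 (Nat.coprime_comm.mp hgcd)
  simpa using h

lemma cancel6 (n : ℕ) (hgcd : Nat.gcd n 6 = 1) (u v : ZMod n)
    (h : (6 : ZMod n) * u = 6 * v) : u = v := by
  have hi := six_inv n hgcd
  calc u = ((6 : ZMod n) * 6⁻¹) * u := by rw [hi, one_mul]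
    _ = 6⁻¹ * (6 * u) := by ring
    _ = 6⁻¹ * (6 * v) := by rw [h]
    _ = ((6 : ZMod n) * 6⁻¹) * v := by ring
    _ = v := by rw [hi, one_mul]

/-- abbreviation for the union of shifted towers -/
def U (n : ℕ) (a b c : ℤ) : Set ℤ :=
  (· + 6 * a) '' tower alphaB n ∪ (· + 6 * b) '' tower betaB n ∪
    (· + 6 * c) '' tower gammaB n

lemma mem_U_alpha (n : ℕ) (hn : 1 ≤ n) (a b c : ℤ) (A0 : ℤ) (hA : A0 = 0 ∨ A0 = 5) :
    ((n : ℤ) * A0 + 6 * ((0 : ℕ) : ℤ) + 6 * a) ∈ U n a b c := by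
  left; left
  exact ⟨(n : ℤ) * A0 + 6 * ((0 : ℕ) : ℤ),
    ⟨0, by omega, A0, by rcases hA with rfl | rfl <;> simp [alphaB], rfl⟩, rfl⟩

lemma mem_U_beta (n : ℕ) (a b c : ℤ) (i : ℕ) (hi : i < n) (hi0 : i ≠ 0) (A0 : ℤ)
    (hA : A0 = 1 ∨ A0 = 4) :
    ((n : ℤ) * A0 + 6 * (i : ℤ) + 6 * b) ∈ U n a b c := by
  left; right
  refine ⟨(n : ℤ) * A0 + 6 * (i : ℤ), ⟨i, hi, A0, ?_, rfl⟩, rfl⟩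
  rw [if_neg hi0]
  rcases hA with rfl | rfl <;> simp [betaB]

lemma mem_U_gamma (n : ℕ) (hn : 1 ≤ n) (a b c : ℤ) (A0 : ℤ) (hA : A0 = 2 ∨ A0 = 3) :
    ((n : ℤ) * A0 + 6 * ((0 : ℕ) : ℤ) + 6 * c) ∈ U n a b c := by
  right
  exact ⟨(n : ℤ) * A0 + 6 * ((0 : ℕ) : ℤ),
    ⟨0, by omega, A0, by rcases hA with rfl | rfl <;> simp [gammaB], rfl⟩, rfl⟩

lemma mem_mink_of (n : ℕ) (hn : 1 ≤ n) (hgcd : Nat.gcd n 6 = 1) (a b c z y : ℤ)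
    (hy : y ∈ U n a b c)
    (h6 : (((n : ℤ) * z : ℤ) : ZMod 6) = (((n : ℤ) * y : ℤ) : ZMod 6))
    (hns : ((z : ℤ) : ZMod n) = ((y : ℤ) : ZMod n)) :
    z ∈ mink (multZ (6 * n)) (U n a b c) := by
  obtain ⟨k, hk⟩ := key n hn hgcd z y h6 hns
  exact ⟨6 * (n : ℤ) * k, ⟨k, rfl⟩, y, hy, hk⟩

lemma mem_blocked (n : ℕ) (hn : 1 ≤ n) (hgcd : Nat.gcd n 6 = 1) (a b c : ℤ) (z : ℤ) :
    z ∈ mink (multZ (6 * n)) (U n a b c) ↔ Bh n a b c z := by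
  have hnz : NeZero n := ⟨by omega⟩
  constructor
  · rintro ⟨d, ⟨k, rfl⟩, y, hy, rfl⟩
    rcases hy with (hy | hy) | hy
    · -- alpha: i = 0 forced, a0 ∈ {0,5}
      obtain ⟨t, ⟨i, hi, a0, ha0, rfl⟩, rfl⟩ := hy
      dsimp only at *
      by_cases hi0 : i = 0
      · subst hi0
        rw [if_pos rfl] at ha0
        simp only [alphaB, if_pos rfl, Set.mem_insert_iff, Set.mem_singleton_iff] at ha0
        left
        refine ⟨?_, S_eq n _ (6 * a) (6 * k + a0) (by push_cast; ring)⟩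
        rcases ha0 with rfl | rfl
        · exact Or.inl (T_val n hgcd _ 0 ((n : ℤ) * (n : ℤ) * k + a * (n : ℤ)) 0
            (by push_cast; ring) (by norm_num))
        · exact Or.inr (T_val n hgcd _ 5 ((n : ℤ) * (n : ℤ) * k + a * (n : ℤ)) 5
            (by push_cast; ring) (by norm_num))
      · rw [if_neg hi0] at ha0
        simp only [alphaB] at ha0
        simp at ha0
    · -- beta: i ≠ 0 forced, a0 ∈ {1,4}
      obtain ⟨t, ⟨i, hi, a0, ha0, rfl⟩, rfl⟩ := hy
      dsimp only at *
      by_cases hi0 : i = 0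
      · subst hi0
        rw [if_pos rfl] at ha0
        simp only [betaB] at ha0
        simp at ha0
      · rw [if_neg hi0] at ha0
        have hbeta : betaB 0 = {1, 4} := by simp [betaB]
        rw [hbeta] at ha0
        simp only [Set.mem_insert_iff, Set.mem_singleton_iff] at ha0
        right; left
        constructor
        · rcases ha0 with rfl | rfl
          · exact Or.inl (T_val n hgcd _ 1
              ((n : ℤ) * (n : ℤ) * k + (i : ℤ) * (n : ℤ) + b * (n : ℤ))
              1 (by push_cast; ring) (by norm_num))
          · exact Or.inr (T_val n hgcd _ 4
              ((n : ℤ) * (n : ℤ) * k + (i : ℤ) * (n : ℤ) + b * (n : ℤ))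
              4 (by push_cast; ring) (by norm_num))
        · -- second coordinate is 6 i + 6 b ≠ 6 b
          have hS : ((6 * (n : ℤ) * k + ((n : ℤ) * a0 + 6 * (i : ℕ) + 6 * b) : ℤ) : ZMod n)
              = ((6 * (i : ℕ) + 6 * b : ℤ) : ZMod n) :=
            S_eq n _ (6 * (i : ℕ) + 6 * b) (6 * k + a0) (by push_cast; ring)
          rw [hS]
          intro hcon
          have h6i : (6 : ZMod n) * ((i : ℕ) : ZMod n) = (6 : ZMod n) * 0 := by
            rw [mul_zero]
            have h1 : ((6 * (i : ℕ) + 6 * b : ℤ) : ZMod n) - ((6 * b : ℤ) : ZMod n) = 0 := by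
              rw [hcon]; ring
            calc (6 : ZMod n) * ((i : ℕ) : ZMod n)
                = ((6 * (i : ℕ) + 6 * b : ℤ) : ZMod n) - ((6 * b : ℤ) : ZMod n) := by
                  push_cast; ring
              _ = 0 := h1
          have hi0' : ((i : ℕ) : ZMod n) = 0 := cancel6 n hgcd _ 0 h6i
          have hdvd : n ∣ i := (ZMod.natCast_eq_zero_iff i n).mp hi0'
          have := Nat.le_of_dvd (Nat.pos_of_ne_zero hi0) hdvd
          omega
    · -- gamma: i = 0 forced, a0 ∈ {2,3}
      obtain ⟨t, ⟨i, hi, a0, ha0, rfl⟩, rfl⟩ := hy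
      dsimp only at *
      by_cases hi0 : i = 0
      · subst hi0
        rw [if_pos rfl] at ha0
        simp only [gammaB, if_pos rfl, Set.mem_insert_iff, Set.mem_singleton_iff] at ha0
        right; right
        refine ⟨?_, S_eq n _ (6 * c) (6 * k + a0) (by push_cast; ring)⟩
        rcases ha0 with rfl | rfl
        · exact Or.inl (T_val n hgcd _ 2 ((n : ℤ) * (n : ℤ) * k + c * (n : ℤ)) 2
            (by push_cast; ring) (by norm_num))
        · exact Or.inr (T_val n hgcd _ 3 ((n : ℤ) * (n : ℤ) * k + c * (n : ℤ)) 3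
            (by push_cast; ring) (by norm_num))
      · rw [if_neg hi0] at ha0
        simp only [gammaB] at ha0
        simp at ha0
  · intro hB
    rcases hB with ⟨hT, hS⟩ | ⟨hT, hS⟩ | ⟨hT, hS⟩
    · -- alpha
      rcases hT with hT | hT
      · exact mem_mink_of n hn hgcd a b c z _ (mem_U_alpha n hn a b c 0 (Or.inl rfl))
          (hT.trans (T_val n hgcd ((n : ℤ) * 0 + 6 * ((0 : ℕ) : ℤ) + 6 * a) 0 (a * (n : ℤ)) 0
            (by push_cast; ring) (by norm_num)).symm)
          (hS.trans (S_eq n ((n : ℤ) * 0 + 6 * ((0 : ℕ) : ℤ) + 6 * a) (6 * a) 0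
            (by push_cast; ring)).symm)
      · exact mem_mink_of n hn hgcd a b c z _ (mem_U_alpha n hn a b c 5 (Or.inr rfl))
          (hT.trans (T_val n hgcd ((n : ℤ) * 5 + 6 * ((0 : ℕ) : ℤ) + 6 * a) 5 (a * (n : ℤ)) 5
            (by push_cast; ring) (by norm_num)).symm)
          (hS.trans (S_eq n ((n : ℤ) * 5 + 6 * ((0 : ℕ) : ℤ) + 6 * a) (6 * a) 5
            (by push_cast; ring)).symm)
    · -- beta : construct i
      set v : ZMod n := ((z : ZMod n) - ((6 * b : ℤ) : ZMod n)) * (6 : ZMod n)⁻¹ with hv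
      have h6v : (6 : ZMod n) * v = (z : ZMod n) - ((6 * b : ℤ) : ZMod n) := by
        rw [hv]
        calc (6 : ZMod n) * (((z : ZMod n) - ((6 * b : ℤ) : ZMod n)) * (6 : ZMod n)⁻¹)
            = ((6 : ZMod n) * (6 : ZMod n)⁻¹) * ((z : ZMod n) - ((6 * b : ℤ) : ZMod n)) := by
              ring
          _ = (z : ZMod n) - ((6 * b : ℤ) : ZMod n) := by rw [six_inv n hgcd, one_mul]
      have hvne : v ≠ 0 := by
        intro h0
        rw [h0, mul_zero] at h6v
        exact hS (by linear_combination -h6v)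
      set i : ℕ := v.val with hidef
      have hival : ((i : ℕ) : ZMod n) = v := ZMod.natCast_rightInverse v
      have hilt : i < n := ZMod.val_lt v
      have hine : i ≠ 0 := by
        intro h0
        apply hvne
        rw [← hival, h0, Nat.cast_zero]
      have hSgen : ∀ A0 : ℤ, (((n : ℤ) * A0 + 6 * (i : ℤ) + 6 * b : ℤ) : ZMod n)
          = ((z : ℤ) : ZMod n) := by
        intro A0
        have h1 : (((n : ℤ) * A0 + 6 * (i : ℤ) + 6 * b : ℤ) : ZMod n)
            = ((6 * (i : ℤ) + 6 * b : ℤ) : ZMod n) :=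
          S_eq n _ (6 * (i : ℤ) + 6 * b) A0 (by push_cast; ring)
        rw [h1]
        have h2 : ((6 * (i : ℤ) + 6 * b : ℤ) : ZMod n)
            = (6 : ZMod n) * ((i : ℕ) : ZMod n) + ((6 * b : ℤ) : ZMod n) := by
          push_cast; ring
        rw [h2, hival, h6v]; ring
      rcases hT with hT | hT
      · exact mem_mink_of n hn hgcd a b c z _ (mem_U_beta n a b c i hilt hine 1 (Or.inl rfl))
          (hT.trans (T_val n hgcd ((n : ℤ) * 1 + 6 * (i : ℤ) + 6 * b) 1
            ((i : ℤ) * (n : ℤ) + b * (n : ℤ)) 1 (by push_cast; ring) (by norm_num)).symm)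
          (hSgen 1).symm
      · exact mem_mink_of n hn hgcd a b c z _ (mem_U_beta n a b c i hilt hine 4 (Or.inr rfl))
          (hT.trans (T_val n hgcd ((n : ℤ) * 4 + 6 * (i : ℤ) + 6 * b) 4
            ((i : ℤ) * (n : ℤ) + b * (n : ℤ)) 4 (by push_cast; ring) (by norm_num)).symm)
          (hSgen 4).symm
    · -- gamma
      rcases hT with hT | hT
      · exact mem_mink_of n hn hgcd a b c z _ (mem_U_gamma n hn a b c 2 (Or.inl rfl))
          (hT.trans (T_val n hgcd ((n : ℤ) * 2 + 6 * ((0 : ℕ) : ℤ) + 6 * c) 2 (c * (n : ℤ)) 2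
            (by push_cast; ring) (by norm_num)).symm)
          (hS.trans (S_eq n ((n : ℤ) * 2 + 6 * ((0 : ℕ) : ℤ) + 6 * c) (6 * c) 2
            (by push_cast; ring)).symm)
      · exact mem_mink_of n hn hgcd a b c z _ (mem_U_gamma n hn a b c 3 (Or.inr rfl))
          (hT.trans (T_val n hgcd ((n : ℤ) * 3 + 6 * ((0 : ℕ) : ℤ) + 6 * c) 3 (c * (n : ℤ)) 3
            (by push_cast; ring) (by norm_num)).symm)
          (hS.trans (S_eq n ((n : ℤ) * 3 + 6 * ((0 : ℕ) : ℤ) + 6 * c) (6 * c) 3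
            (by push_cast; ring)).symm)

lemma Tshift (n : ℕ) (hgcd : Nat.gcd n 6 = 1) (z : ℤ) :
    (((n : ℤ) * (z + (n : ℤ)) : ℤ) : ZMod 6) = (((n : ℤ) * z : ℤ) : ZMod 6) + 1 := by
  have h2 := nsq n hgcd
  push_cast
  linear_combination h2

lemma Sshift (n : ℕ) (z : ℤ) :
    ((z + (n : ℤ) : ℤ) : ZMod n) = ((z : ℤ) : ZMod n) := by
  push_cast
  simp [ZMod.natCast_self]

lemma Bh_iff_blk (n : ℕ) (a b c : ℤ) (z : ℤ) :
    Bh n a b c z ↔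
      (((n : ℤ) * z : ℤ) : ZMod 6) ∈
        blk (decide ((z : ZMod n) = ((6 * a : ℤ) : ZMod n)))
          (decide ((z : ZMod n) = ((6 * b : ℤ) : ZMod n)))
          (decide ((z : ZMod n) = ((6 * c : ℤ) : ZMod n))) := by
  rw [mem_blk_iff]
  simp only [decide_eq_true_eq, decide_eq_false_iff_not]
  exact Iff.rfl

lemma not_tiles (n : ℕ) (hn : 1 ≤ n) (hgcd : Nat.gcd n 6 = 1) (a b c : ℤ)
    (hab : (a : ZMod n) = (b : ZMod n)) (hbc : (b : ZMod n) = (c : ZMod n)) :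
    ¬ Tiles1 {0, (n : ℤ)} (mink (multZ (6 * n)) (U n a b c))ᶜ := by
  rintro ⟨W, hW, hd⟩
  have hab6 : ((6 * a : ℤ) : ZMod n) = ((6 * b : ℤ) : ZMod n) := by push_cast; rw [hab]
  have hac6 : ((6 * a : ℤ) : ZMod n) = ((6 * c : ℤ) : ZMod n) := by push_cast; rw [hab, hbc]
  -- z₀ = 6a + n is free
  have hT1 : (((n : ℤ) * (6 * a + (n : ℤ)) : ℤ) : ZMod 6) = 1 :=
    T_val n hgcd (6 * a + (n : ℤ)) 1 (a * (n : ℤ)) 1 (by push_cast; ring) (by norm_num)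
  have hS0 : ((6 * a + (n : ℤ) : ℤ) : ZMod n) = ((6 * a : ℤ) : ZMod n) :=
    S_eq n (6 * a + (n : ℤ)) (6 * a) 1 (by ring)
  have hz₀E : (6 * a + (n : ℤ)) ∈ (mink (multZ (6 * n)) (U n a b c))ᶜ := by
    rw [Set.mem_compl_iff, mem_blocked n hn hgcd]
    intro hB
    rcases hB with ⟨h1, _⟩ | ⟨_, h2⟩ | ⟨h3, _⟩
    · rw [hT1] at h1; rcases h1 with h | h <;> exact absurd h (by decide)
    · exact h2 (hS0.trans hab6)
    · rw [hT1] at h3; rcases h3 with h | h <;> exact absurd h (by decide)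
  rw [← hW] at hz₀E
  obtain ⟨w, hw, p, hp, hzw⟩ := hz₀E
  have hp' : p = 0 ∨ p = (n : ℤ) := by simpa using hp
  rcases hp' with rfl | rfl
  · -- w = 6a + n ; then 6a + 2n is both in the tiling and blocked
    have hz1 : (6 * a + 2 * (n : ℤ)) ∈ mink W {0, (n : ℤ)} :=
      ⟨w, hw, (n : ℤ), by simp, by omega⟩
    rw [hW, Set.mem_compl_iff] at hz1
    apply hz1
    rw [mem_blocked n hn hgcd]
    right; right
    refine ⟨Or.inl (T_val n hgcd (6 * a + 2 * (n : ℤ)) 2 (a * (n : ℤ)) 2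
      (by push_cast; ring) (by norm_num)), ?_⟩
    exact (S_eq n (6 * a + 2 * (n : ℤ)) (6 * a) 2 (by ring)).trans hac6
  · -- w = 6a ; blocked but in the tiling
    have hz1 : (6 * a : ℤ) ∈ mink W {0, (n : ℤ)} := by
      refine ⟨w, hw, 0, by simp, ?_⟩
      omega
    rw [hW, Set.mem_compl_iff] at hz1
    apply hz1
    rw [mem_blocked n hn hgcd]
    left
    exact ⟨Or.inl (T_val n hgcd (6 * a) 0 (a * (n : ℤ)) 0 (by push_cast; ring) (by norm_num)),
      rfl⟩

lemma tiles_of (n : ℕ) (hn : 1 ≤ n) (hgcd : Nat.gcd n 6 = 1) (a b c : ℤ)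
    (h : ¬((a : ZMod n) = (b : ZMod n) ∧ (b : ZMod n) = (c : ZMod n))) :
    Tiles1 {0, (n : ℤ)} (mink (multZ (6 * n)) (U n a b c))ᶜ := by
  classical
  have hnot : ∀ z : ℤ, ¬(((z : ZMod n) = ((6 * a : ℤ) : ZMod n)) ∧
      ((z : ZMod n) = ((6 * b : ℤ) : ZMod n)) ∧ ((z : ZMod n) = ((6 * c : ℤ) : ZMod n))) := by
    rintro z ⟨h1, h2, h3⟩
    apply h
    constructor
    · apply cancel6 n hgcd
      have h12 : ((6 * a : ℤ) : ZMod n) = ((6 * b : ℤ) : ZMod n) := h1.symm.trans h2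
      push_cast at h12
      linear_combination h12
    · apply cancel6 n hgcd
      have h23 : ((6 * b : ℤ) : ZMod n) = ((6 * c : ℤ) : ZMod n) := h2.symm.trans h3
      push_cast at h23
      linear_combination h23
  have hnab : ∀ z : ℤ,
      ¬((decide ((z : ZMod n) = ((6 * a : ℤ) : ZMod n))) = true ∧
        (decide ((z : ZMod n) = ((6 * b : ℤ) : ZMod n))) = true ∧
        (decide ((z : ZMod n) = ((6 * c : ℤ) : ZMod n))) = true) := by
    rintro z ⟨h1, h2, h3⟩
    exact hnot z ⟨of_decide_eq_true h1, of_decide_eq_true h2, of_decide_eq_true h3⟩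
  refine ⟨{z : ℤ | (((n : ℤ) * z : ℤ) : ZMod 6) ∈
    pat (decide ((z : ZMod n) = ((6 * a : ℤ) : ZMod n)))
      (decide ((z : ZMod n) = ((6 * b : ℤ) : ZMod n)))
      (decide ((z : ZMod n) = ((6 * c : ℤ) : ZMod n)))}, ?_, ?_⟩
  · ext z
    simp only [Set.mem_compl_iff]
    rw [mem_blocked n hn hgcd]
    constructor
    · rintro ⟨w, hw, p, hp, rfl⟩
      simp only [Set.mem_setOf_eq] at hw
      have hp' : p = 0 ∨ p = (n : ℤ) := by simpa using hp
      rcases hp' with rfl | rfl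
      · rw [add_zero]
        intro hB
        rw [Bh_iff_blk] at hB
        exact ((patL1 _ _ _ (hnab w) _).mp (Or.inl hw)) hB
      · intro hB
        rw [Bh_iff_blk, Tshift n hgcd w, Sshift n w] at hB
        have hsub : (((n : ℤ) * w : ℤ) : ZMod 6) + 1 - 1 = (((n : ℤ) * w : ℤ) : ZMod 6) := by
          ring
        exact ((patL1 _ _ _ (hnab w) _).mp (Or.inr (by rw [hsub]; exact hw))) hB
    · intro hnB
      have hblk := (patL1 _ _ _ (hnab z) _).mpr (fun hm => hnB ((Bh_iff_blk n a b c z).mpr hm))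
      rcases hblk with h1 | h1
      · exact ⟨z, h1, 0, by simp, (add_zero z).symm⟩
      · refine ⟨z - (n : ℤ), ?_, (n : ℤ), by simp, by ring⟩
        simp only [Set.mem_setOf_eq]
        have hz : z - (n : ℤ) + (n : ℤ) = z := by ring
        have hT : (((n : ℤ) * z : ℤ) : ZMod 6)
            = (((n : ℤ) * (z - (n : ℤ)) : ℤ) : ZMod 6) + 1 := by
          rw [← Tshift n hgcd (z - (n : ℤ)), hz]
        have hS : ((z : ℤ) : ZMod n) = ((z - (n : ℤ) : ℤ) : ZMod n) := by
          rw [← Sshift n (z - (n : ℤ)), hz]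
        rw [← hS]
        have hT' : (((n : ℤ) * (z - (n : ℤ)) : ℤ) : ZMod 6)
            = (((n : ℤ) * z : ℤ) : ZMod 6) - 1 := by rw [hT]; ring
        rw [hT']
        exact h1
  · rintro w₁ h1 p₁ hp1 w₂ h2 p₂ hp2 heq
    simp only [Set.mem_setOf_eq] at h1 h2
    have hp1' : p₁ = 0 ∨ p₁ = (n : ℤ) := by simpa using hp1
    have hp2' : p₂ = 0 ∨ p₂ = (n : ℤ) := by simpa using hp2
    rcases hp1' with rfl | rfl <;> rcases hp2' with rfl | rfl
    · exact ⟨by omega, rfl⟩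
    · exfalso
      have hw12 : w₁ = w₂ + (n : ℤ) := by omega
      rw [hw12, Tshift n hgcd w₂, Sshift n w₂] at h1
      exact patL2 _ _ _ _ h2 h1
    · exfalso
      have hw12 : w₂ = w₁ + (n : ℤ) := by omega
      rw [hw12, Tshift n hgcd w₁, Sshift n w₁] at h2
      exact patL2 _ _ _ _ h1 h2
    · exact ⟨by omega, rfl⟩

end Stmt13Aux

/-- Tower obstruction: nD = {0,n} tiles the complement of the three shifted towers
(arranged 6n-periodically) iff it is not the case that a ≡ b ≡ c (mod n). -/
theorem stmt13 (n : ℕ) (hn : 1 ≤ n) (hgcd : Nat.gcd n 6 = 1) (a b c : ℤ) :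
    Tiles1 {0, (n : ℤ)}
      (mink (multZ (6 * n))
        ((· + 6 * a) '' tower alphaB n ∪ (· + 6 * b) '' tower betaB n ∪
          (· + 6 * c) '' tower gammaB n))ᶜ ↔
      ¬((a : ZMod n) = (b : ZMod n) ∧ (b : ZMod n) = (c : ZMod n)) := by
  have hU : ((· + 6 * a) '' tower alphaB n ∪ (· + 6 * b) '' tower betaB n ∪
      (· + 6 * c) '' tower gammaB n) = Stmt13Aux.U n a b c := rfl
  rw [hU]
  constructor
  · intro hT hall
    exact Stmt13Aux.not_tiles n hn hgcd a b c hall.1 hall.2 hT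
  · exact Stmt13Aux.tiles_of n hn hgcd a b c
end

section
/- The filler cannot tile any set containing a full 3×3 horizontal square: let O = {-1,0,1}² \ {(0,0)} ⊂ ℤ² and let the filler F = O × {0,n} ⊂ ℤ³ for a positive integer n. If E ⊆ ℤ³ contains a translate of {-1,0,1}² × {0}, then F does not tile E by translations. -/
def mink3 (A B : Set P3) : Set P3 := {z | ∃ a ∈ A, ∃ b ∈ B, z = a + b}

/-- P tiles E by translations: some W with W ⊕ P = E, non-overlapping. -/
def Tiles3 (P E : Set P3) : Prop :=
  ∃ W : Set P3, mink3 W P = E ∧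
    ∀ w₁ ∈ W, ∀ p₁ ∈ P, ∀ w₂ ∈ W, ∀ p₂ ∈ P, w₁ + p₁ = w₂ + p₂ → w₁ = w₂ ∧ p₁ = p₂

/-- The 3×3 square with the center removed. -/
def Osq : Set (ℤ × ℤ) :=
  {q | q.1 ∈ ({-1, 0, 1} : Set ℤ) ∧ q.2 ∈ ({-1, 0, 1} : Set ℤ) ∧ q ≠ (0, 0)}

/-- The filler F = O × {0, n}. -/
def filler (n : ℕ) : Set P3 :=
  {p | (p.1, p.2.1) ∈ Osq ∧ (p.2.2 = 0 ∨ p.2.2 = (n : ℤ))}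

/-- The filler cannot tile any set containing a translate of the full 3×3 horizontal
square {-1,0,1}² × {0}. -/
theorem stmt14 (n : ℕ) (hn : 1 ≤ n) (E : Set P3)
    (hE : ∃ v : P3, ∀ d₁ ∈ ({-1, 0, 1} : Set ℤ), ∀ d₂ ∈ ({-1, 0, 1} : Set ℤ),
      v + (d₁, d₂, 0) ∈ E) :
    ¬ Tiles3 (filler n) E := by
  rintro ⟨W, hWF, hdisj⟩
  obtain ⟨v, hv⟩ := hE
  obtain ⟨vx, vy, vz⟩ := v
  -- v itself lies in E
  have hv0 : ((vx, vy, vz) : P3) ∈ E := by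
    have := hv 0 (by norm_num) 0 (by norm_num)
    simpa using this
  rw [← hWF] at hv0
  obtain ⟨w1, hw1, p1, hp1, hvp⟩ := hv0
  obtain ⟨w1x, w1y, w1z⟩ := w1
  obtain ⟨a, b, z1⟩ := p1
  obtain ⟨⟨ha, hb, -⟩, hz1⟩ := hp1
  simp only [Set.mem_insert_iff, Set.mem_singleton_iff] at ha hb
  -- component equations for v = w1 + p1
  have hvp' : vx = w1x + a ∧ vy = w1y + b ∧ vz = w1z + z1 := by
    simpa [Prod.ext_iff] using hvp
  obtain ⟨hv1, hv2, hv3⟩ := hvp'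
  -- the hole of the first tile at this level lies in E
  have hh1E : ((vx, vy, vz) : P3) + (-a, -b, 0) ∈ E := by
    apply hv
    · rcases ha with h | h | h <;> simp [h]
    · rcases hb with h | h | h <;> simp [h]
  rw [← hWF] at hh1E
  obtain ⟨w2, hw2, p2, hp2, hh1p⟩ := hh1E
  obtain ⟨w2x, w2y, w2z⟩ := w2
  obtain ⟨a', b', z2⟩ := p2
  obtain ⟨⟨ha', hb', hab'⟩, hz2⟩ := hp2
  simp only [Set.mem_insert_iff, Set.mem_singleton_iff] at ha' hb'
  have hab0 : ¬ (a' = 0 ∧ b' = 0) := by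
    intro ⟨h1, h2⟩; exact hab' (by simp [h1, h2])
  have hh1p' : vx - a = w2x + a' ∧ vy - b = w2y + b' ∧ vz = w2z + z2 := by
    have := hh1p
    simp only [Prod.ext_iff, Prod.fst_add, Prod.snd_add] at this
    constructor
    · linarith [this.1]
    constructor
    · linarith [this.2.1]
    · linarith [this.2.2]
  obtain ⟨hq1, hq2, hq3⟩ := hh1p'
  -- choose an overlap offset (x, y)
  obtain ⟨x, y, hx, hy, hxy0, hxa, hyb, hxy'0⟩ :
      ∃ x y : ℤ, (x = -1 ∨ x = 0 ∨ x = 1) ∧ (y = -1 ∨ y = 0 ∨ y = 1) ∧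
        ¬(x = 0 ∧ y = 0) ∧ (x + a' = -1 ∨ x + a' = 0 ∨ x + a' = 1) ∧
        (y + b' = -1 ∨ y + b' = 0 ∨ y + b' = 1) ∧ ¬(x + a' = 0 ∧ y + b' = 0) := by
    rcases ha' with rfl | rfl | rfl <;> rcases hb' with rfl | rfl | rfl
    · exact ⟨0, 1, by norm_num⟩
    · exact ⟨0, 1, by norm_num⟩
    · exact ⟨0, -1, by norm_num⟩
    · exact ⟨1, 0, by norm_num⟩
    · exact absurd ⟨rfl, rfl⟩ hab0
    · exact ⟨1, 0, by norm_num⟩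
    · exact ⟨0, 1, by norm_num⟩
    · exact ⟨0, 1, by norm_num⟩
    · exact ⟨0, -1, by norm_num⟩
  -- the two tiles overlap at w1 + (x, y, z1) = w2 + (x + a', y + b', z2)
  have hmem1 : ((x, y, z1) : P3) ∈ filler n := by
    refine ⟨⟨?_, ?_, ?_⟩, hz1⟩
    · simpa using hx
    · simpa using hy
    · simp only [ne_eq, Prod.mk.injEq, not_and]
      intro h1 h2; exact hxy0 ⟨h1, h2⟩
  have hmem2 : ((x + a', y + b', z2) : P3) ∈ filler n := by
    refine ⟨⟨?_, ?_, ?_⟩, hz2⟩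
    · simpa using hxa
    · simpa using hyb
    · simp only [ne_eq, Prod.mk.injEq, not_and]
      intro h1 h2; exact hxy'0 ⟨h1, h2⟩
  have hsum : ((w1x, w1y, w1z) : P3) + (x, y, z1) = ((w2x, w2y, w2z) : P3) + (x + a', y + b', z2) := by
    simp only [Prod.ext_iff, Prod.fst_add, Prod.snd_add]
    refine ⟨by linarith, by linarith, by linarith⟩
  have := (hdisj _ hw1 _ hmem1 _ hw2 _ hmem2 hsum).2
  simp only [Prod.mk.injEq] at this
  exact hab0 ⟨by linarith [this.1], by linarith [this.2.1]⟩
end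

section
/- Scaled-cube tiling rigidity: the cube C = {0,...,L-1}³ tiles ℤ³ by any complement set, but if one adds bumps at {(-1,1,1), (1,-1,1), (1,1,-1)} and removes dents at {(L-1,1,1), (1,L-1,1), (1,1,L-1)} to obtain a modified tile Q, then in any tiling of ℤ³ by translates of Q, the set of translation vectors is a coset-free lattice: all copies of Q lie on positions congruent modulo L, i.e., the translation set W satisfies W = w₀ + Lℤ³ for some w₀ ∈ ℤ³. -/
/-- The cube {0,...,L-1}³ with bumps added at (-1,1,1), (1,-1,1), (1,1,-1) and dents
removed at (L-1,1,1), (1,L-1,1), (1,1,L-1). -/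
def bumpedCube (L : ℤ) : Set P3 :=
  ({p | 0 ≤ p.1 ∧ p.1 ≤ L - 1 ∧ 0 ≤ p.2.1 ∧ p.2.1 ≤ L - 1 ∧ 0 ≤ p.2.2 ∧ p.2.2 ≤ L - 1}
      ∪ {(-1, 1, 1), (1, -1, 1), (1, 1, -1)}) \
    {(L - 1, 1, 1), (1, L - 1, 1), (1, 1, L - 1)}

lemma memQ {L x y z : ℤ} : ((x,y,z) : P3) ∈ bumpedCube L ↔
    (((0 ≤ x ∧ x ≤ L-1 ∧ 0 ≤ y ∧ y ≤ L-1 ∧ 0 ≤ z ∧ z ≤ L-1) ∨ (x=-1∧y=1∧z=1) ∨ (x=1∧y=-1∧z=1) ∨ (x=1∧y=1∧z=-1)) ∧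
    ¬((x=L-1∧y=1∧z=1) ∨ (x=1∧y=L-1∧z=1) ∨ (x=1∧y=1∧z=L-1))) := by
  show ((x,y,z) : P3) ∈ (_ ∪ _) \ _ ↔ _
  simp only [Set.mem_diff, Set.mem_union, Set.mem_setOf_eq, Set.mem_insert_iff,
    Set.mem_singleton_iff, Prod.mk.injEq]

set_option maxHeartbeats 4000000 in
lemma pairX {L x y z : ℤ} (hL : 4 ≤ L) (h : ((x,y,z) : P3) ∈ bumpedCube L)
    (h2 : ((x+1,y,z) : P3) ∉ bumpedCube L) (h3 : ((x-1,y,z) : P3) ∉ bumpedCube L) :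
    (x=0∧y=1∧z=L-1)∨(x=0∧y=L-1∧z=1)∨(x=1∧y=-1∧z=1)∨(x=1∧y=1∧z=-1) := by
  rw [memQ] at h h2 h3
  obtain ⟨hP, hD⟩ := h
  rcases hP with hc | hb | hb | hb
  · have H2 : x = L-1 ∨ ((x+1=L-1∧y=1∧z=1) ∨ (x+1=1∧y=L-1∧z=1) ∨ (x+1=1∧y=1∧z=L-1)) := by
      by_contra hcon
      refine h2 ⟨Or.inl ?_, ?_⟩
      · clear h2 h3; omega
      · clear h2 h3; omega
    have H3 : (x = 0 ∧ ¬(y=1∧z=1)) ∨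
        ((x-1=L-1∧y=1∧z=1) ∨ (x-1=1∧y=L-1∧z=1) ∨ (x-1=1∧y=1∧z=L-1)) := by
      by_contra hcon
      refine h3 ⟨?_, ?_⟩
      · clear h2 h3; omega
      · clear h2 h3; omega
    clear h2 h3
    omega
  · exfalso
    refine h2 ⟨Or.inl ?_, ?_⟩ <;> (clear h2 h3; omega)
  · clear h2 h3 hD; omega
  · clear h2 h3 hD; omega

set_option maxHeartbeats 4000000 in
lemma pairY {L x y z : ℤ} (hL : 4 ≤ L) (h : ((x,y,z) : P3) ∈ bumpedCube L)
    (h2 : ((x,y+1,z) : P3) ∉ bumpedCube L) (h3 : ((x,y-1,z) : P3) ∉ bumpedCube L) :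
    (x=-1∧y=1∧z=1)∨(x=1∧y=0∧z=L-1)∨(x=1∧y=1∧z=-1)∨(x=L-1∧y=0∧z=1) := by
  rw [memQ] at h h2 h3
  obtain ⟨hP, hD⟩ := h
  rcases hP with hc | hb | hb | hb
  · have H2 : y = L-1 ∨ ((x=L-1∧y+1=1∧z=1) ∨ (x=1∧y+1=L-1∧z=1) ∨ (x=1∧y+1=1∧z=L-1)) := by
      by_contra hcon
      refine h2 ⟨Or.inl ?_, ?_⟩
      · clear h2 h3; omega
      · clear h2 h3; omega
    have H3 : (y = 0 ∧ ¬(x=1∧z=1)) ∨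
        ((x=L-1∧y-1=1∧z=1) ∨ (x=1∧y-1=L-1∧z=1) ∨ (x=1∧y-1=1∧z=L-1)) := by
      by_contra hcon
      refine h3 ⟨?_, ?_⟩
      · clear h2 h3; omega
      · clear h2 h3; omega
    clear h2 h3
    omega
  · clear h2 h3 hD; omega
  · exfalso
    refine h2 ⟨Or.inl ?_, ?_⟩ <;> (clear h2 h3; omega)
  · clear h2 h3 hD; omega

set_option maxHeartbeats 4000000 in
lemma pairZ {L x y z : ℤ} (hL : 4 ≤ L) (h : ((x,y,z) : P3) ∈ bumpedCube L)
    (h2 : ((x,y,z+1) : P3) ∉ bumpedCube L) (h3 : ((x,y,z-1) : P3) ∉ bumpedCube L) :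
    (x=-1∧y=1∧z=1)∨(x=1∧y=-1∧z=1)∨(x=1∧y=L-1∧z=0)∨(x=L-1∧y=1∧z=0) := by
  rw [memQ] at h h2 h3
  obtain ⟨hP, hD⟩ := h
  rcases hP with hc | hb | hb | hb
  · have H2 : z = L-1 ∨ ((x=L-1∧y=1∧z+1=1) ∨ (x=1∧y=L-1∧z+1=1) ∨ (x=1∧y=1∧z+1=L-1)) := by
      by_contra hcon
      refine h2 ⟨Or.inl ?_, ?_⟩
      · clear h2 h3; omega
      · clear h2 h3; omega
    have H3 : (z = 0 ∧ ¬(x=1∧y=1)) ∨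
        ((x=L-1∧y=1∧z-1=1) ∨ (x=1∧y=L-1∧z-1=1) ∨ (x=1∧y=1∧z-1=L-1)) := by
      by_contra hcon
      refine h3 ⟨?_, ?_⟩
      · clear h2 h3; omega
      · clear h2 h3; omega
    clear h2 h3
    omega
  · clear h2 h3 hD; omega
  · clear h2 h3 hD; omega
  · exfalso
    refine h2 ⟨Or.inl ?_, ?_⟩ <;> (clear h2 h3; omega)

lemma key1 {L x y z : ℤ} (hL : 4 ≤ L) (h : ((x,y,z) : P3) ∈ bumpedCube L)
    (h2 : ((x,y+1,z) : P3) ∉ bumpedCube L) (h3 : ((x,y-1,z) : P3) ∉ bumpedCube L)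
    (h4 : ((x,y,z+1) : P3) ∉ bumpedCube L) (h5 : ((x,y,z-1) : P3) ∉ bumpedCube L) :
    x = -1 ∧ y = 1 ∧ z = 1 := by
  have a := pairY hL h h2 h3
  have b := pairZ hL h h4 h5
  omega

lemma key2 {L x y z : ℤ} (hL : 4 ≤ L) (h : ((x,y,z) : P3) ∈ bumpedCube L)
    (h2 : ((x+1,y,z) : P3) ∉ bumpedCube L) (h3 : ((x-1,y,z) : P3) ∉ bumpedCube L)
    (h4 : ((x,y,z+1) : P3) ∉ bumpedCube L) (h5 : ((x,y,z-1) : P3) ∉ bumpedCube L) :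
    x = 1 ∧ y = -1 ∧ z = 1 := by
  have a := pairX hL h h2 h3
  have b := pairZ hL h h4 h5
  omega

lemma key3 {L x y z : ℤ} (hL : 4 ≤ L) (h : ((x,y,z) : P3) ∈ bumpedCube L)
    (h2 : ((x+1,y,z) : P3) ∉ bumpedCube L) (h3 : ((x-1,y,z) : P3) ∉ bumpedCube L)
    (h4 : ((x,y+1,z) : P3) ∉ bumpedCube L) (h5 : ((x,y-1,z) : P3) ∉ bumpedCube L) :
    x = 1 ∧ y = 1 ∧ z = -1 := by
  have a := pairX hL h h2 h3
  have b := pairY hL h h4 h5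
  omega

set_option maxHeartbeats 4000000 in
lemma overlapQ {L r1 r2 r3 : ℤ} (hL : 4 ≤ L) (ha1 : 0 ≤ r1) (hb1 : r1 < L)
    (ha2 : 0 ≤ r2) (hb2 : r2 < L) (ha3 : 0 ≤ r3) (hb3 : r3 < L) :
    ∃ q1 q2 q3 : ℤ, ((q1,q2,q3) : P3) ∈ bumpedCube L ∧
      ((q1-r1,q2-r2,q3-r3) : P3) ∈ bumpedCube L := by
  by_cases hA : r1 = 0 ∧ r2 = L-2 ∧ r3 = L-2
  · exact ⟨L-2, L-1, L-1, by rw [memQ]; omega, by rw [memQ]; omega⟩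
  by_cases hB : r1 = L-2 ∧ r2 = 0 ∧ r3 = L-2
  · exact ⟨L-1, L-2, L-1, by rw [memQ]; omega, by rw [memQ]; omega⟩
  by_cases hC : r1 = L-2 ∧ r2 = L-2 ∧ r3 = 0
  · exact ⟨L-1, L-1, L-2, by rw [memQ]; omega, by rw [memQ]; omega⟩
  · exact ⟨L-1, L-1, L-1, by rw [memQ]; omega, by rw [memQ]; omega⟩

lemma smallmul {L a m : ℤ} (hL : 4 ≤ L) (h : a = L * m) (hb : -1 ≤ a) (hb2 : a ≤ L - 1) :
    a = 0 := by
  rcases lt_trichotomy m 0 with hm | hm | hm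
  · have : L * m ≤ L * (-1) := mul_le_mul_of_nonneg_left (by omega) (by omega)
    linarith
  · simp [hm] at h; omega
  · have : L * 1 ≤ L * m := mul_le_mul_of_nonneg_left (by omega) (by omega)
    linarith
/-- Rigidity: in any tiling of ℤ³ by translates of the bumped cube Q, the translation
set is a coset of the lattice Lℤ³. -/
theorem stmt15 (L : ℤ) (hL : 4 ≤ L) (W : Set P3)
    (hcover : mink3 W (bumpedCube L) = Set.univ)
    (hnonov : ∀ w₁ ∈ W, ∀ p₁ ∈ bumpedCube L, ∀ w₂ ∈ W, ∀ p₂ ∈ bumpedCube L,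
      w₁ + p₁ = w₂ + p₂ → w₁ = w₂ ∧ p₁ = p₂) :
    ∃ w₀ : P3, W = {p | ∃ v : P3, p = w₀ + L • v} := by
  have hcov : ∀ x : P3, ∃ w ∈ W, ∃ p ∈ bumpedCube L, x = w + p := by
    intro x
    have hx : x ∈ mink3 W (bumpedCube L) := by rw [hcover]; trivial
    exact hx
  -- step lemmas
  have step1 : ∀ w1 w2 w3 : ℤ, ((w1,w2,w3) : P3) ∈ W → ((w1 + L, w2, w3) : P3) ∈ W := by
    intro w1 w2 w3 hw
    obtain ⟨w', hw', p, hp, hx⟩ := hcov (w1 + (L-1), w2 + 1, w3 + 1)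
    obtain ⟨a, b, c⟩ := w'
    obtain ⟨p1, p2, p3⟩ := p
    simp only [Prod.mk_add_mk, Prod.mk.injEq] at hx
    obtain ⟨e1, e2, e3⟩ := hx
    have hne : ¬(a = w1 ∧ b = w2 ∧ c = w3) := by
      rintro ⟨rfl, rfl, rfl⟩
      rw [memQ] at hp
      omega
    have excl : ∀ s1 s2 s3 n1 n2 n3 : ℤ, ((n1,n2,n3) : P3) ∈ bumpedCube L →
        a + s1 = w1 + n1 → b + s2 = w2 + n2 → c + s3 = w3 + n3 →
        ((s1,s2,s3) : P3) ∉ bumpedCube L := by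
      intro s1 s2 s3 n1 n2 n3 hn f1 f2 f3 hm
      have := hnonov _ hw' _ hm _ hw _ hn
        (by simp only [Prod.mk_add_mk, Prod.mk.injEq]; exact ⟨f1, f2, f3⟩)
      exact hne (by simpa [Prod.ext_iff] using this.1)
    have h2 := excl p1 (p2+1) p3 (L-1) 2 1 (by rw [memQ]; omega)
      (by omega) (by omega) (by omega)
    have h3 := excl p1 (p2-1) p3 (L-1) 0 1 (by rw [memQ]; omega)
      (by omega) (by omega) (by omega)
    have h4 := excl p1 p2 (p3+1) (L-1) 1 2 (by rw [memQ]; omega)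
      (by omega) (by omega) (by omega)
    have h5 := excl p1 p2 (p3-1) (L-1) 1 0 (by rw [memQ]; omega)
      (by omega) (by omega) (by omega)
    have hk := key1 hL hp h2 h3 h4 h5
    have : ((w1 + L, w2, w3) : P3) = (a, b, c) := by
      simp only [Prod.mk.injEq]; omega
    rw [this]; exact hw'
  have step2 : ∀ w1 w2 w3 : ℤ, ((w1,w2,w3) : P3) ∈ W → ((w1, w2 + L, w3) : P3) ∈ W := by
    intro w1 w2 w3 hw
    obtain ⟨w', hw', p, hp, hx⟩ := hcov (w1 + 1, w2 + (L-1), w3 + 1)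
    obtain ⟨a, b, c⟩ := w'
    obtain ⟨p1, p2, p3⟩ := p
    simp only [Prod.mk_add_mk, Prod.mk.injEq] at hx
    obtain ⟨e1, e2, e3⟩ := hx
    have hne : ¬(a = w1 ∧ b = w2 ∧ c = w3) := by
      rintro ⟨rfl, rfl, rfl⟩
      rw [memQ] at hp
      omega
    have excl : ∀ s1 s2 s3 n1 n2 n3 : ℤ, ((n1,n2,n3) : P3) ∈ bumpedCube L →
        a + s1 = w1 + n1 → b + s2 = w2 + n2 → c + s3 = w3 + n3 →
        ((s1,s2,s3) : P3) ∉ bumpedCube L := by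
      intro s1 s2 s3 n1 n2 n3 hn f1 f2 f3 hm
      have := hnonov _ hw' _ hm _ hw _ hn
        (by simp only [Prod.mk_add_mk, Prod.mk.injEq]; exact ⟨f1, f2, f3⟩)
      exact hne (by simpa [Prod.ext_iff] using this.1)
    have h2 := excl (p1+1) p2 p3 2 (L-1) 1 (by rw [memQ]; omega)
      (by omega) (by omega) (by omega)
    have h3 := excl (p1-1) p2 p3 0 (L-1) 1 (by rw [memQ]; omega)
      (by omega) (by omega) (by omega)
    have h4 := excl p1 p2 (p3+1) 1 (L-1) 2 (by rw [memQ]; omega)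
      (by omega) (by omega) (by omega)
    have h5 := excl p1 p2 (p3-1) 1 (L-1) 0 (by rw [memQ]; omega)
      (by omega) (by omega) (by omega)
    have hk := key2 hL hp h2 h3 h4 h5
    have : ((w1, w2 + L, w3) : P3) = (a, b, c) := by
      simp only [Prod.mk.injEq]; omega
    rw [this]; exact hw'
  have step3 : ∀ w1 w2 w3 : ℤ, ((w1,w2,w3) : P3) ∈ W → ((w1, w2, w3 + L) : P3) ∈ W := by
    intro w1 w2 w3 hw
    obtain ⟨w', hw', p, hp, hx⟩ := hcov (w1 + 1, w2 + 1, w3 + (L-1))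
    obtain ⟨a, b, c⟩ := w'
    obtain ⟨p1, p2, p3⟩ := p
    simp only [Prod.mk_add_mk, Prod.mk.injEq] at hx
    obtain ⟨e1, e2, e3⟩ := hx
    have hne : ¬(a = w1 ∧ b = w2 ∧ c = w3) := by
      rintro ⟨rfl, rfl, rfl⟩
      rw [memQ] at hp
      omega
    have excl : ∀ s1 s2 s3 n1 n2 n3 : ℤ, ((n1,n2,n3) : P3) ∈ bumpedCube L →
        a + s1 = w1 + n1 → b + s2 = w2 + n2 → c + s3 = w3 + n3 →
        ((s1,s2,s3) : P3) ∉ bumpedCube L := by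
      intro s1 s2 s3 n1 n2 n3 hn f1 f2 f3 hm
      have := hnonov _ hw' _ hm _ hw _ hn
        (by simp only [Prod.mk_add_mk, Prod.mk.injEq]; exact ⟨f1, f2, f3⟩)
      exact hne (by simpa [Prod.ext_iff] using this.1)
    have h2 := excl (p1+1) p2 p3 2 1 (L-1) (by rw [memQ]; omega)
      (by omega) (by omega) (by omega)
    have h3 := excl (p1-1) p2 p3 0 1 (L-1) (by rw [memQ]; omega)
      (by omega) (by omega) (by omega)
    have h4 := excl p1 (p2+1) p3 1 2 (L-1) (by rw [memQ]; omega)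
      (by omega) (by omega) (by omega)
    have h5 := excl p1 (p2-1) p3 1 0 (L-1) (by rw [memQ]; omega)
      (by omega) (by omega) (by omega)
    have hk := key3 hL hp h2 h3 h4 h5
    have : ((w1, w2, w3 + L) : P3) = (a, b, c) := by
      simp only [Prod.mk.injEq]; omega
    rw [this]; exact hw'
  -- iterate
  have iter1 : ∀ (n : ℕ) (w1 w2 w3 : ℤ), ((w1,w2,w3) : P3) ∈ W →
      ((w1 + L * n, w2, w3) : P3) ∈ W := by
    intro n
    induction n with
    | zero => intro w1 w2 w3 hw; simpa using hw
    | succ n ih =>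
      intro w1 w2 w3 hw
      have h' := step1 _ _ _ (ih w1 w2 w3 hw)
      have he : w1 + L * ((n:ℕ)+1 : ℕ) = w1 + L * n + L := by push_cast; ring
      rw [he]; exact h'
  have iter2 : ∀ (n : ℕ) (w1 w2 w3 : ℤ), ((w1,w2,w3) : P3) ∈ W →
      ((w1, w2 + L * n, w3) : P3) ∈ W := by
    intro n
    induction n with
    | zero => intro w1 w2 w3 hw; simpa using hw
    | succ n ih =>
      intro w1 w2 w3 hw
      have h' := step2 _ _ _ (ih w1 w2 w3 hw)
      have he : w2 + L * ((n:ℕ)+1 : ℕ) = w2 + L * n + L := by push_cast; ring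
      rw [he]; exact h'
  have iter3 : ∀ (n : ℕ) (w1 w2 w3 : ℤ), ((w1,w2,w3) : P3) ∈ W →
      ((w1, w2, w3 + L * n) : P3) ∈ W := by
    intro n
    induction n with
    | zero => intro w1 w2 w3 hw; simpa using hw
    | succ n ih =>
      intro w1 w2 w3 hw
      have h' := step3 _ _ _ (ih w1 w2 w3 hw)
      have he : w3 + L * ((n:ℕ)+1 : ℕ) = w3 + L * n + L := by push_cast; ring
      rw [he]; exact h'
  have iter : ∀ (n1 n2 n3 : ℕ) (w1 w2 w3 : ℤ), ((w1,w2,w3) : P3) ∈ W →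
      ((w1 + L * n1, w2 + L * n2, w3 + L * n3) : P3) ∈ W := by
    intro n1 n2 n3 w1 w2 w3 hw
    exact iter3 n3 _ _ _ (iter2 n2 _ _ _ (iter1 n1 _ _ _ hw))
  -- congruence
  have cong : ∀ w1 w2 w3 : ℤ, ((w1,w2,w3) : P3) ∈ W → ∀ v1 v2 v3 : ℤ,
      ((v1,v2,v3) : P3) ∈ W →
      ∃ k1 k2 k3 : ℤ, v1 = w1 + L*k1 ∧ v2 = w2 + L*k2 ∧ v3 = w3 + L*k3 := by
    intro w1 w2 w3 hw v1 v2 v3 hv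
    have hL0 : (0:ℤ) < L := by omega
    obtain ⟨q1, q2, q3, hq, hq'⟩ := overlapQ hL
      (Int.emod_nonneg (v1 - w1) (by omega)) (Int.emod_lt_of_pos (v1 - w1) hL0)
      (Int.emod_nonneg (v2 - w2) (by omega)) (Int.emod_lt_of_pos (v2 - w2) hL0)
      (Int.emod_nonneg (v3 - w3) (by omega)) (Int.emod_lt_of_pos (v3 - w3) hL0)
    have hd1 : L * ((v1 - w1) / L) + (v1 - w1) % L = v1 - w1 := Int.mul_ediv_add_emod _ _
    have hd2 : L * ((v2 - w2) / L) + (v2 - w2) % L = v2 - w2 := Int.mul_ediv_add_emod _ _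
    have hd3 : L * ((v3 - w3) / L) + (v3 - w3) % L = v3 - w3 := Int.mul_ediv_add_emod _ _
    set k1 := (v1 - w1) / L with hk1
    set k2 := (v2 - w2) / L with hk2
    set k3 := (v3 - w3) / L with hk3
    have ha := iter k1.toNat k2.toNat k3.toNat w1 w2 w3 hw
    have hb := iter (-k1).toNat (-k2).toNat (-k3).toNat v1 v2 v3 hv
    have hn1 : (k1.toNat : ℤ) - ((-k1).toNat : ℤ) = k1 := by omega
    have hn2 : (k2.toNat : ℤ) - ((-k2).toNat : ℤ) = k2 := by omega
    have hn3 : (k3.toNat : ℤ) - ((-k3).toNat : ℤ) = k3 := by omega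
    have heq : ((w1 + L * k1.toNat, w2 + L * k2.toNat, w3 + L * k3.toNat) : P3) +
        (q1, q2, q3) =
        ((v1 + L * (-k1).toNat, v2 + L * (-k2).toNat, v3 + L * (-k3).toNat) : P3) +
        (q1 - (v1 - w1) % L, q2 - (v2 - w2) % L, q3 - (v3 - w3) % L) := by
      simp only [Prod.mk_add_mk, Prod.mk.injEq]
      refine ⟨by linear_combination L * hn1 + hd1, by linear_combination L * hn2 + hd2,
        by linear_combination L * hn3 + hd3⟩
    have hab := hnonov _ ha _ hq _ hb _ hq' heq
    have hab1 := hab.1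
    simp only [Prod.mk.injEq] at hab1
    obtain ⟨g1, g2, g3⟩ := hab1
    exact ⟨(k1.toNat : ℤ) - ((-k1).toNat : ℤ), (k2.toNat : ℤ) - ((-k2).toNat : ℤ),
      (k3.toNat : ℤ) - ((-k3).toNat : ℤ),
      by linear_combination -g1, by linear_combination -g2, by linear_combination -g3⟩
  -- conclusion
  obtain ⟨w₀, hw₀, p₀, hp₀, hx0⟩ := hcov 0
  obtain ⟨a0, b0, c0⟩ := w₀
  refine ⟨(a0, b0, c0), ?_⟩
  ext ⟨x1, x2, x3⟩
  simp only [Set.mem_setOf_eq]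
  constructor
  · intro hx
    obtain ⟨k1, k2, k3, g1, g2, g3⟩ := cong a0 b0 c0 hw₀ x1 x2 x3 hx
    refine ⟨(k1, k2, k3), ?_⟩
    simp only [Prod.smul_mk, smul_eq_mul, Prod.mk_add_mk, Prod.mk.injEq]
    exact ⟨g1, g2, g3⟩
  · rintro ⟨⟨v1, v2, v3⟩, hv⟩
    simp only [Prod.smul_mk, smul_eq_mul, Prod.mk_add_mk, Prod.mk.injEq] at hv
    obtain ⟨hv1, hv2, hv3⟩ := hv
    obtain ⟨w, hw, p, hp, hxe⟩ := hcov (x1, x2, x3)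
    obtain ⟨u1, u2, u3⟩ := w
    obtain ⟨p1, p2, p3⟩ := p
    simp only [Prod.mk_add_mk, Prod.mk.injEq] at hxe
    obtain ⟨f1, f2, f3⟩ := hxe
    obtain ⟨k1, k2, k3, g1, g2, g3⟩ := cong a0 b0 c0 hw₀ u1 u2 u3 hw
    have hbound : -1 ≤ p1 ∧ p1 ≤ L-1 ∧ -1 ≤ p2 ∧ p2 ≤ L-1 ∧ -1 ≤ p3 ∧ p3 ≤ L-1 := by
      rw [memQ] at hp
      omega
    have hz1 : p1 = 0 := smallmul hL (m := v1 - k1)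
      (by linear_combination -f1 + hv1 - g1) hbound.1 hbound.2.1
    have hz2 : p2 = 0 := smallmul hL (m := v2 - k2)
      (by linear_combination -f2 + hv2 - g2) hbound.2.2.1 hbound.2.2.2.1
    have hz3 : p3 = 0 := smallmul hL (m := v3 - k3)
      (by linear_combination -f3 + hv3 - g3) hbound.2.2.2.2.1 hbound.2.2.2.2.2
    have : ((x1, x2, x3) : P3) = (u1, u2, u3) := by
      simp only [Prod.mk.injEq]; omega
    rw [this]; exact hw
end

section
/- For n ≥ 4 and m ≥ 1, the partition Q_{n,1}, ..., Q_{n,m} of {0,...,m+1}ⁿ given by f_n is externally adjacent: for all 1 ≤ i < j ≤ m and every unit vector v = ±e_k (k = 1,...,n), there exist a ∈ Q_{n,i} and b ∈ Q_{n,j} with a + (m+1)v = b. In particular, for v = ±eₙ: (j,i,0,...,0,0) ∈ Q_{n,i} and (j,i,0,...,0,m+1) ∈ Q_{n,j}, while (i,j,0,...,0,m+1) ∈ Q_{n,i} and (i,j,0,...,0,0) ∈ Q_{n,j}. -/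
/-- The 3-dimensional partition function. -/
def f3 (m x y z : ℤ) : ℤ :=
  if 0 ≤ x ∧ x ≤ m ∧ 1 ≤ y ∧ y ≤ m ∧ z = 0 then y
  else if 1 ≤ x ∧ x ≤ m ∧ 0 ≤ y ∧ y ≤ m ∧ z = m + 1 then x
  else if x = 0 ∧ 1 ≤ y ∧ y ≤ m ∧ 1 ≤ z ∧ z ≤ m then y
  else if 1 ≤ x ∧ x ≤ m ∧ y = 0 ∧ 1 ≤ z ∧ z ≤ m then x
  else if 1 ≤ x ∧ x ≤ m + 1 ∧ 1 ≤ y ∧ y ≤ m + 1 ∧ 1 ≤ z ∧ z ≤ m then z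
  else 1

/-- `fA m k` is the (k+3)-dimensional partition function f_{k+3}; points of ℤⁿ are
encoded as functions ℕ → ℤ (coordinates x₁,...,xₙ at indices 0,...,n-1). -/
def fA (m : ℤ) : ℕ → (ℕ → ℤ) → ℤ
  | 0, x => f3 m (x 0) (x 1) (x 2)
  | k + 1, x =>
    if 0 ≤ x (k + 3) ∧ x (k + 3) ≤ m then fA m k x
    else fA m k (fun t => if t = 0 then m + 1 - x 1 else if t = 1 then x 0 else x t)

/-- f_N for N ≥ 3. -/
def fN (m : ℤ) (N : ℕ) : (ℕ → ℤ) → ℤ := fA m (N - 3)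

/-- The N-dimensional cube {0,...,m+1}ᴺ (coordinates beyond N are 0). -/
def cubeN (m : ℤ) (N : ℕ) : Set (ℕ → ℤ) :=
  {x | (∀ t, t < N → 0 ≤ x t ∧ x t ≤ m + 1) ∧ ∀ t, N ≤ t → x t = 0}

/-- The i-th part of the partition of the N-dimensional cube. -/
def QN (m : ℤ) (N : ℕ) (i : ℤ) : Set (ℕ → ℤ) :=
  {x ∈ cubeN m N | fN m N x = i}

/-- One step by a coordinate unit vector among the first N coordinates. -/
def StepN (N : ℕ) (p q : ℕ → ℤ) : Prop :=
  ∃ t, t < N ∧ ∃ e : ℤ, (e = 1 ∨ e = -1) ∧ q = Function.update p t (p t + e)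

/-- The point (c₀, c₁, 0, ..., 0, cₗ) in ℤᴺ (last coordinate index N-1). -/
def pt (N : ℕ) (c₀ c₁ cl : ℤ) : ℕ → ℤ :=
  fun s => if s = 0 then c₀ else if s = 1 then c₁ else if s = N - 1 then cl else 0

/-- Auxiliary witness point: c₀ at index 0, c₁ at index 1, c at index t, 0 elsewhere. -/
def w (N : ℕ) (c₀ c₁ : ℤ) (t : ℕ) (c : ℤ) : ℕ → ℤ :=
  fun s => if s = 0 then c₀ else if s = 1 then c₁ else if s = t then c else 0

lemma fA_pass (m : ℤ) : ∀ (k : ℕ) (x : ℕ → ℤ),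
    (∀ s, 3 ≤ s → s ≤ k + 2 → 0 ≤ x s ∧ x s ≤ m) →
    fA m k x = f3 m (x 0) (x 1) (x 2)
  | 0, _, _ => rfl
  | k + 1, x, h => by
    rw [fA, if_pos (h (k + 3) (by omega) (by omega))]
    exact fA_pass m k x fun s h1 h2 => h s h1 (by omega)

lemma fA_swap (m : ℤ) (hm : 0 ≤ m) : ∀ (k t : ℕ) (x : ℕ → ℤ),
    3 ≤ t → t ≤ k + 2 → x t = m + 1 →
    (∀ s, 3 ≤ s → s ≤ k + 2 → s ≠ t → x s = 0) →
    fA m k x = f3 m (m + 1 - x 1) (x 0) (x 2)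
  | 0, t, _, ht3, ht2, _, _ => absurd ht2 (by omega)
  | k + 1, t, x, ht3, ht2, hxt, hz => by
    by_cases hc : t = k + 3
    · rw [hc] at hxt
      rw [fA, if_neg (by omega)]
      refine (fA_pass m k _ ?_).trans (by norm_num)
      intro s h1 h2
      simp only [if_neg (show ¬s = 0 by omega), if_neg (show ¬s = 1 by omega)]
      rw [hz s h1 (by omega) (by omega)]
      omega
    · rw [fA, if_pos (by rw [hz (k + 3) (by omega) (by omega) (by omega)]; omega)]
      exact fA_swap m hm k t x ht3 (by omega) hxt fun s h1 h2 h3 => hz s h1 (by omega) h3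

lemma w_mem (m : ℤ) (N t : ℕ) (c₀ c₁ c : ℤ) (ht2 : 2 ≤ t) (htN : t < N)
    (h0 : 0 ≤ c₀) (h0' : c₀ ≤ m + 1) (h1 : 0 ≤ c₁) (h1' : c₁ ≤ m + 1)
    (hc : 0 ≤ c) (hc' : c ≤ m + 1) : w N c₀ c₁ t c ∈ cubeN m N := by
  constructor
  · intro s _
    simp only [w]
    split_ifs <;> omega
  · intro s hs
    simp only [w]
    split_ifs <;> omega

lemma fN_w2 (m : ℤ) (hm : 0 ≤ m) (N : ℕ) (hN : 4 ≤ N) (c₀ c₁ c : ℤ) :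
    fN m N (w N c₀ c₁ 2 c) = f3 m c₀ c₁ c := by
  rw [fN]
  refine (fA_pass m (N - 3) _ ?_).trans (by norm_num [w])
  intro s h1 h2
  simp only [w, if_neg (show ¬s = 0 by omega), if_neg (show ¬s = 1 by omega),
    if_neg (show ¬s = 2 by omega)]
  omega

lemma fN_w0 (m : ℤ) (hm : 0 ≤ m) (N t : ℕ) (hN : 4 ≤ N) (ht3 : 3 ≤ t) (htN : t < N)
    (c₀ c₁ : ℤ) : fN m N (w N c₀ c₁ t 0) = f3 m c₀ c₁ 0 := by
  rw [fN]
  refine (fA_pass m (N - 3) _ ?_).trans ?_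
  · intro s h1 h2
    simp only [w, if_neg (show ¬s = 0 by omega), if_neg (show ¬s = 1 by omega)]
    split_ifs <;> omega
  · have h2 : ¬(2 : ℕ) = t := by omega
    simp [w, h2]

lemma fN_wswap (m : ℤ) (hm : 0 ≤ m) (N t : ℕ) (hN : 4 ≤ N) (ht3 : 3 ≤ t) (htN : t < N)
    (c₀ c₁ : ℤ) : fN m N (w N c₀ c₁ t (m + 1)) = f3 m (m + 1 - c₁) c₀ 0 := by
  rw [fN]
  refine (fA_swap m hm (N - 3) t _ ht3 (by omega) ?_ ?_).trans ?_
  · simp [w, show ¬t = 0 by omega, show ¬t = 1 by omega]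
  · intro s h1 h2 h3
    simp only [w, if_neg (show ¬s = 0 by omega), if_neg (show ¬s = 1 by omega),
      if_neg (show ¬s = t from h3)]
  · have h2 : ¬(2 : ℕ) = t := by omega
    simp [w, h2]

set_option maxHeartbeats 2000000 in
/-- The partition Q_{n,1},...,Q_{n,m} of {0,...,m+1}ⁿ is externally adjacent; in
particular for v = ±eₙ the stated points witness adjacency. -/
theorem stmt17 (N : ℕ) (hN : 4 ≤ N) (m : ℤ) (hm : 1 ≤ m) (i j : ℤ)
    (hi : 1 ≤ i) (hij : i < j) (hj : j ≤ m) :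
    (∀ t, t < N → ∀ e : ℤ, e = 1 ∨ e = -1 →
      ∃ a ∈ QN m N i, ∃ b ∈ QN m N j,
        b = fun s => a s + if s = t then (m + 1) * e else 0) ∧
    pt N j i 0 ∈ QN m N i ∧ pt N j i (m + 1) ∈ QN m N j ∧
    pt N i j (m + 1) ∈ QN m N i ∧ pt N i j 0 ∈ QN m N j := by
  have hm0 : (0 : ℤ) ≤ m := by omega
  have hN1 : 3 ≤ N - 1 := by omega
  have hN1' : N - 1 < N := by omega
  refine ⟨?_, ?_, ?_, ?_, ?_⟩
  · intro t ht e he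
    by_cases ht0 : t = 0
    · subst ht0
      rcases he with he | he <;> subst he
      · refine ⟨w N 0 i 2 j, ⟨w_mem m N 2 0 i j (by omega) (by omega) (by omega) (by omega)
          (by omega) (by omega) (by omega) (by omega), ?_⟩,
          w N (m + 1) i 2 j, ⟨w_mem m N 2 (m + 1) i j (by omega) (by omega) (by omega) (by omega)
          (by omega) (by omega) (by omega) (by omega), ?_⟩, ?_⟩
        · rw [fN_w2 m hm0 N hN]; unfold f3; split_ifs <;> omega
        · rw [fN_w2 m hm0 N hN]; unfold f3; split_ifs <;> omega
        · funext s; simp only [w]; split_ifs <;> omega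
      · refine ⟨w N (m + 1) j 2 i, ⟨w_mem m N 2 (m + 1) j i (by omega) (by omega) (by omega)
          (by omega) (by omega) (by omega) (by omega) (by omega), ?_⟩,
          w N 0 j 2 i, ⟨w_mem m N 2 0 j i (by omega) (by omega) (by omega) (by omega)
          (by omega) (by omega) (by omega) (by omega), ?_⟩, ?_⟩
        · rw [fN_w2 m hm0 N hN]; unfold f3; split_ifs <;> omega
        · rw [fN_w2 m hm0 N hN]; unfold f3; split_ifs <;> omega
        · funext s; simp only [w]; split_ifs <;> omega
    · by_cases ht1 : t = 1
      · subst ht1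
        rcases he with he | he <;> subst he
        · refine ⟨w N i 0 2 j, ⟨w_mem m N 2 i 0 j (by omega) (by omega) (by omega) (by omega)
            (by omega) (by omega) (by omega) (by omega), ?_⟩,
            w N i (m + 1) 2 j, ⟨w_mem m N 2 i (m + 1) j (by omega) (by omega) (by omega)
            (by omega) (by omega) (by omega) (by omega) (by omega), ?_⟩, ?_⟩
          · rw [fN_w2 m hm0 N hN]; unfold f3; split_ifs <;> omega
          · rw [fN_w2 m hm0 N hN]; unfold f3; split_ifs <;> omega
          · funext s; simp only [w]; split_ifs <;> omega
        · refine ⟨w N j (m + 1) 2 i, ⟨w_mem m N 2 j (m + 1) i (by omega) (by omega) (by omega)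
            (by omega) (by omega) (by omega) (by omega) (by omega), ?_⟩,
            w N j 0 2 i, ⟨w_mem m N 2 j 0 i (by omega) (by omega) (by omega) (by omega)
            (by omega) (by omega) (by omega) (by omega), ?_⟩, ?_⟩
          · rw [fN_w2 m hm0 N hN]; unfold f3; split_ifs <;> omega
          · rw [fN_w2 m hm0 N hN]; unfold f3; split_ifs <;> omega
          · funext s; simp only [w]; split_ifs <;> omega
      · by_cases ht2 : t = 2
        · subst ht2
          rcases he with he | he <;> subst he
          · refine ⟨w N j i 2 0, ⟨w_mem m N 2 j i 0 (by omega) (by omega) (by omega) (by omega)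
              (by omega) (by omega) (by omega) (by omega), ?_⟩,
              w N j i 2 (m + 1), ⟨w_mem m N 2 j i (m + 1) (by omega) (by omega) (by omega)
              (by omega) (by omega) (by omega) (by omega) (by omega), ?_⟩, ?_⟩
            · rw [fN_w2 m hm0 N hN]; unfold f3; split_ifs <;> omega
            · rw [fN_w2 m hm0 N hN]; unfold f3; split_ifs <;> omega
            · funext s; simp only [w]; split_ifs <;> omega
          · refine ⟨w N i j 2 (m + 1), ⟨w_mem m N 2 i j (m + 1) (by omega) (by omega) (by omega)
              (by omega) (by omega) (by omega) (by omega) (by omega), ?_⟩,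
              w N i j 2 0, ⟨w_mem m N 2 i j 0 (by omega) (by omega) (by omega) (by omega)
              (by omega) (by omega) (by omega) (by omega), ?_⟩, ?_⟩
            · rw [fN_w2 m hm0 N hN]; unfold f3; split_ifs <;> omega
            · rw [fN_w2 m hm0 N hN]; unfold f3; split_ifs <;> omega
            · funext s; simp only [w]; split_ifs <;> omega
        · have ht3 : 3 ≤ t := by omega
          rcases he with he | he <;> subst he
          · refine ⟨w N j i t 0, ⟨w_mem m N t j i 0 (by omega) ht (by omega) (by omega)
              (by omega) (by omega) (by omega) (by omega), ?_⟩,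
              w N j i t (m + 1), ⟨w_mem m N t j i (m + 1) (by omega) ht (by omega) (by omega)
              (by omega) (by omega) (by omega) (by omega), ?_⟩, ?_⟩
            · rw [fN_w0 m hm0 N t hN ht3 ht]; unfold f3; split_ifs <;> omega
            · rw [fN_wswap m hm0 N t hN ht3 ht]; unfold f3; split_ifs <;> omega
            · funext s; simp only [w]; split_ifs <;> omega
          · refine ⟨w N i j t (m + 1), ⟨w_mem m N t i j (m + 1) (by omega) ht (by omega)
              (by omega) (by omega) (by omega) (by omega) (by omega), ?_⟩,
              w N i j t 0, ⟨w_mem m N t i j 0 (by omega) ht (by omega) (by omega)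
              (by omega) (by omega) (by omega) (by omega), ?_⟩, ?_⟩
            · rw [fN_wswap m hm0 N t hN ht3 ht]; unfold f3; split_ifs <;> omega
            · rw [fN_w0 m hm0 N t hN ht3 ht]; unfold f3; split_ifs <;> omega
            · funext s; simp only [w]; split_ifs <;> omega
  · refine ⟨w_mem m N (N - 1) j i 0 (by omega) hN1' (by omega) (by omega) (by omega) (by omega)
      (by omega) (by omega), ?_⟩
    show fN m N (w N j i (N - 1) 0) = i
    rw [fN_w0 m hm0 N (N - 1) hN hN1 hN1']; unfold f3; split_ifs <;> omega
  · refine ⟨w_mem m N (N - 1) j i (m + 1) (by omega) hN1' (by omega) (by omega) (by omega)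
      (by omega) (by omega) (by omega), ?_⟩
    show fN m N (w N j i (N - 1) (m + 1)) = j
    rw [fN_wswap m hm0 N (N - 1) hN hN1 hN1']; unfold f3; split_ifs <;> omega
  · refine ⟨w_mem m N (N - 1) i j (m + 1) (by omega) hN1' (by omega) (by omega) (by omega)
      (by omega) (by omega) (by omega), ?_⟩
    show fN m N (w N i j (N - 1) (m + 1)) = i
    rw [fN_wswap m hm0 N (N - 1) hN hN1 hN1']; unfold f3; split_ifs <;> omega
  · refine ⟨w_mem m N (N - 1) i j 0 (by omega) hN1' (by omega) (by omega) (by omega) (by omega)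
      (by omega) (by omega), ?_⟩
    show fN m N (w N i j (N - 1) 0) = j
    rw [fN_w0 m hm0 N (N - 1) hN hN1 hN1']; unfold f3; split_ifs <;> omega
end
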